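/- arXiv:2008.00043 — 8 statements merged into one kernel-verified Lean document; each statement's English description precedes it below -/
import Mathlib

section
/- Let Δ be a simplicial complex on [n] with at least one nonempty face. The generalized covariance map φ_Δ is a linear automorphism of ℝ^Δ̄, and the image of the correlation polytope Corr(Δ) under φ_Δ equals the generalized cut polytope GCut(Δ); moreover φ_Δ(v^S) = d^S for every S ⊆ [n]. In particular, GCut(Δ) and Corr(Δ) are isomorphic polytopes. -/
open Finset

/-- The index type of the nonempty faces of a simplicial complex `Δ` on `[n]`. -/
abbrev FaceIdx {n : ℕ} (Δ : Finset (Finset (Fin n))) : Type :=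
  {F : Finset (Fin n) // F ∈ Δ ∧ F.Nonempty}

/-- The vertex `d^S` of the generalized cut polytope:
`d^S_F = 1` if `#(F ∩ S)` is odd, `0` otherwise. -/
noncomputable def dvec {n : ℕ} (Δ : Finset (Finset (Fin n))) (S : Finset (Fin n)) :
    FaceIdx Δ → ℝ :=
  fun F => if Odd ((F.val ∩ S).card) then 1 else 0

/-- The vertex `v^S` of the correlation polytope: `v^S_F = 1` if `F ⊆ S`, `0` otherwise. -/
noncomputable def vvec {n : ℕ} (Δ : Finset (Finset (Fin n))) (S : Finset (Fin n)) :
    FaceIdx Δ → ℝ :=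
  fun F => if F.val ⊆ S then 1 else 0

lemma key_sum {n : ℕ} (A : Finset (Fin n)) :
    ∑ H ∈ A.powerset.filter (fun H => H.Nonempty), (-2:ℝ)^(H.card-1)
      = if Odd A.card then 1 else 0 := by
  classical
  have hfull : ∑ H ∈ A.powerset, (-2:ℝ)^H.card = (-1:ℝ)^A.card := by
    have := Finset.sum_pow_mul_eq_add_pow (-2:ℝ) 1 A
    norm_num at this
    exact this
  have hsplit := Finset.sum_filter_add_sum_filter_not A.powerset
    (fun H => H.Nonempty) (fun H => (-2:ℝ)^H.card)
  have hempty : A.powerset.filter (fun H => ¬ H.Nonempty) = {∅} := by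
    ext H
    simp [Finset.not_nonempty_iff_eq_empty, and_comm]
    intro h; subst h; simp
  rw [hempty, hfull] at hsplit
  simp only [Finset.sum_singleton, Finset.card_empty, pow_zero] at hsplit
  have hmul : (-2:ℝ) * ∑ H ∈ A.powerset.filter (fun H => H.Nonempty), (-2:ℝ)^(H.card-1)
      = ∑ H ∈ A.powerset.filter (fun H => H.Nonempty), (-2:ℝ)^H.card := by
    rw [Finset.mul_sum]
    refine Finset.sum_congr rfl fun H hH => ?_
    have hne : H.Nonempty := (Finset.mem_filter.1 hH).2
    have hc : 1 ≤ H.card := Finset.card_pos.2 hne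
    rw [← pow_succ']
    congr 1
    omega
  have h1 : (-2:ℝ) * ∑ H ∈ A.powerset.filter (fun H => H.Nonempty), (-2:ℝ)^(H.card-1)
      = (-1:ℝ)^A.card - 1 := by
    rw [hmul]; linarith
  by_cases h : Odd A.card
  · rw [if_pos h]
    rw [h.neg_one_pow] at h1
    linarith
  · rw [if_neg h]
    rw [Nat.not_odd_iff_even] at h
    rw [h.neg_one_pow] at h1
    linarith

/-- the generalized covariance map `φ_Δ`, given by
`[φ_Δ(y)]_F = Σ_{∅ ≠ H ⊆ F} (−2)^(#H−1) y_H`, is a linear automorphism of `ℝ^Δ̄` sending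
`v^S` to `d^S` for all `S ⊆ [n]`, and it maps `Corr(Δ)` onto `GCut(Δ)`. -/
theorem stmt_1 {n : ℕ} (Δ : Finset (Finset (Fin n)))
    (hΔ : ∀ F ∈ Δ, ∀ G, G ⊆ F → G ∈ Δ)
    (hne : ∃ F ∈ Δ, F.Nonempty) :
    ∃ φ : (FaceIdx Δ → ℝ) ≃ₗ[ℝ] (FaceIdx Δ → ℝ),
      (∀ (y : FaceIdx Δ → ℝ) (F : FaceIdx Δ), φ y F =
        ∑ H : FaceIdx Δ,
          if H.val ⊆ F.val then (-2 : ℝ) ^ (H.val.card - 1) * y H else 0) ∧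
      (∀ S : Finset (Fin n), φ (vvec Δ S) = dvec Δ S) ∧
      ⇑φ '' convexHull ℝ (Set.range (vvec Δ)) = convexHull ℝ (Set.range (dvec Δ)) := by
  classical
  set T : (FaceIdx Δ → ℝ) →ₗ[ℝ] (FaceIdx Δ → ℝ) :=
    { toFun := fun y F => ∑ H : FaceIdx Δ,
        if H.val ⊆ F.val then (-2 : ℝ) ^ (H.val.card - 1) * y H else 0
      map_add' := by
        intro y z; funext F
        simp only [Pi.add_apply, ← Finset.sum_add_distrib]
        refine Finset.sum_congr rfl fun H _ => ?_
        split_ifs <;> ring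
      map_smul' := by
        intro c y; funext F
        simp only [Pi.smul_apply, RingHom.id_apply, smul_eq_mul, Finset.mul_sum]
        refine Finset.sum_congr rfl fun H _ => ?_
        split_ifs <;> ring } with hT
  have hTapp : ∀ (y : FaceIdx Δ → ℝ) (F : FaceIdx Δ), T y F =
      ∑ H : FaceIdx Δ,
        if H.val ⊆ F.val then (-2 : ℝ) ^ (H.val.card - 1) * y H else 0 := fun y F => rfl
  -- injectivity
  have hinj : Function.Injective T := by
    rw [← LinearMap.ker_eq_bot, LinearMap.ker_eq_bot']
    intro y hy
    have hzero : ∀ k (F : FaceIdx Δ), F.val.card ≤ k → y F = 0 := by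
      intro k
      induction k with
      | zero =>
        intro F hF
        exact absurd (Finset.card_pos.2 F.2.2) (by omega)
      | succ k ih =>
        intro F hF
        have h0 : T y F = 0 := congrFun hy F
        rw [hTapp] at h0
        rw [Finset.sum_eq_add_sum_sdiff_singleton_of_mem (Finset.mem_univ F)] at h0
        have hrest : ∀ H ∈ Finset.univ \ {F},
            (if H.val ⊆ F.val then (-2 : ℝ) ^ (H.val.card - 1) * y H else 0) = 0 := by
          intro H hH
          have hHne : H ≠ F := by simpa using hH
          by_cases hsub : H.val ⊆ F.val
          · have hss : H.val ⊂ F.val := by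
              refine ⟨hsub, fun hc => hHne (Subtype.ext (Finset.Subset.antisymm hsub hc))⟩
            have : H.val.card < F.val.card := Finset.card_lt_card hss
            rw [if_pos hsub, ih H (by omega), mul_zero]
          · rw [if_neg hsub]
        rw [Finset.sum_eq_zero hrest, add_zero, if_pos (Finset.Subset.refl _)] at h0
        have hne2 : ((-2 : ℝ) ^ (F.val.card - 1)) ≠ 0 := pow_ne_zero _ (by norm_num)
        exact (mul_eq_zero.1 h0).resolve_left hne2
    funext F
    exact hzero F.val.card F le_rfl
  have hsurj : Function.Surjective T :=
    (LinearMap.injective_iff_surjective).1 hinj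
  let φ : (FaceIdx Δ → ℝ) ≃ₗ[ℝ] (FaceIdx Δ → ℝ) :=
    LinearEquiv.ofBijective T ⟨hinj, hsurj⟩
  have hφapp : ∀ y, φ y = T y := fun y => rfl
  have hmap : ∀ S : Finset (Fin n), φ (vvec Δ S) = dvec Δ S := by
    intro S
    funext F
    rw [hφapp, hTapp]
    have hconv : ∀ H : FaceIdx Δ,
        (if H.val ⊆ F.val then (-2 : ℝ) ^ (H.val.card - 1) * vvec Δ S H else 0)
          = if H.val ⊆ F.val ∩ S then (-2 : ℝ) ^ (H.val.card - 1) else 0 := by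
      intro H
      simp only [vvec, Finset.subset_inter_iff]
      split_ifs with h1 h2 h3 h3 <;> simp_all
    simp only [hconv]
    rw [← Finset.sum_subtype (Δ.filter (fun G => G.Nonempty))
      (by intro x; simp [Finset.mem_filter]) (fun H => if H ⊆ F.val ∩ S then (-2:ℝ)^(H.card-1) else 0)]
    rw [← Finset.sum_filter]
    have hsets : (Δ.filter (fun G => G.Nonempty)).filter (fun H => H ⊆ F.val ∩ S)
        = (F.val ∩ S).powerset.filter (fun H => H.Nonempty) := by
      ext H
      simp only [Finset.mem_filter, Finset.mem_powerset]
      constructor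
      · rintro ⟨⟨_, h2⟩, h3⟩; exact ⟨h3, h2⟩
      · rintro ⟨h1, h2⟩
        exact ⟨⟨hΔ F.val F.2.1 H (h1.trans (Finset.inter_subset_left)), h2⟩, h1⟩
    rw [hsets, key_sum]
    rfl
  refine ⟨φ, fun y F => hTapp y F, hmap, ?_⟩
  have hcomp : ⇑T ∘ vvec Δ = dvec Δ := funext fun S => hmap S
  rw [show ⇑φ = ⇑T from rfl, T.image_convexHull, ← Set.range_comp, hcomp]
end

section
/- Let Δ be a simplicial complex on [n]. Then GCut(Δ) is full-dimensional in its ambient space: the affine span of the points {d^S : S ⊆ [n]} is all of ℝ^Δ̄. Consequently, the dimension of GCut(Δ) equals the number of nonempty faces of Δ. -/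
open Finset

section ParityCharacters

variable {R α : Type*} [CommRing R] [DecidableEq α]

lemma neg_one_pow_card_inter (F S : Finset α) :
    (-1 : R) ^ #(F ∩ S) = ∏ i ∈ S, if i ∈ F then -1 else 1 := by
  rw [prod_ite_mem, prod_const, inter_comm]

lemma sum_neg_one_pow_card_inter_mul [Fintype α] (F G : Finset α) :
    ∑ S : Finset α, (-1 : R) ^ #(F ∩ S) * (-1) ^ #(G ∩ S) =
      if F = G then 2 ^ Fintype.card α else 0 := by
  simp_rw [neg_one_pow_card_inter, ← prod_mul_distrib]
  rw [← powerset_univ, ← prod_one_add]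
  split_ifs with hFG
  · subst hFG
    rw [← card_univ, ← prod_const]
    exact prod_congr rfl fun i _ => by split_ifs <;> simp [one_add_one_eq_two]
  · obtain ⟨i, hi⟩ := not_forall.mp (mt Finset.ext hFG)
    refine prod_eq_zero (mem_univ i) ?_
    by_cases hF : i ∈ F <;> by_cases hG : i ∈ G <;> simp_all

end ParityCharacters

lemma ite_odd_eq_one_sub_neg_one_pow_div_two (k : ℕ) :
    (if Odd k then (1 : ℝ) else 0) = (1 - (-1) ^ k) / 2 := by
  rcases Nat.even_or_odd k with hk | hk
  · simp [hk.neg_one_pow, Nat.not_odd_iff_even.mpr hk]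
  · simp [hk.neg_one_pow, hk]

lemma dvec_apply_eq {n : ℕ} (Δ : Finset (Finset (Fin n))) (S : Finset (Fin n))
    (G : FaceIdx Δ) : dvec Δ S G = (1 - (-1) ^ #(G.val ∩ S)) / 2 :=
  ite_odd_eq_one_sub_neg_one_pow_div_two _

lemma sum_neg_one_pow_smul_dvec {n : ℕ} (Δ : Finset (Finset (Fin n))) (F : FaceIdx Δ) :
    ∑ S : Finset (Fin n), (-1 : ℝ) ^ #(F.val ∩ S) • dvec Δ S = Pi.single F (-2 ^ n / 2) := by
  ext G
  -- writing `1` as the character of `∅` turns both sums into orthogonality relations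
  have hχ : ∀ S : Finset (Fin n), (-1 : ℝ) ^ #(F.val ∩ S) * dvec Δ S G =
      ((-1) ^ #(F.val ∩ S) * (-1) ^ #((∅ : Finset (Fin n)) ∩ S) -
        (-1) ^ #(F.val ∩ S) * (-1) ^ #(G.val ∩ S)) / 2 := fun S => by
    rw [dvec_apply_eq, empty_inter, card_empty, pow_zero, mul_one]; ring
  simp only [Finset.sum_apply, Pi.smul_apply, smul_eq_mul, hχ, ← sum_div, sum_sub_distrib,
    sum_neg_one_pow_card_inter_mul, Fintype.card_fin, if_neg F.2.2.ne_empty, Pi.single_apply,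
    eq_comm (a := G), ← Subtype.ext_iff]
  split_ifs <;> ring

lemma single_mem_span_dvec {n : ℕ} (Δ : Finset (Finset (Fin n))) (F : FaceIdx Δ) :
    Pi.single F 1 ∈ Submodule.span ℝ (Set.range (dvec Δ)) := by
  have hsum := Submodule.sum_mem (Submodule.span ℝ (Set.range (dvec Δ)))
    fun S (_ : S ∈ univ) => Submodule.smul_mem _ ((-1 : ℝ) ^ #(F.val ∩ S))
      (Submodule.subset_span (Set.mem_range_self S))
  rwa [sum_neg_one_pow_smul_dvec, ← mul_one (-2 ^ n / 2 : ℝ), ← smul_eq_mul, Pi.single_smul',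
    Submodule.smul_mem_iff _ (by simp)] at hsum

lemma span_dvec_eq_top {n : ℕ} (Δ : Finset (Finset (Fin n))) :
    Submodule.span ℝ (Set.range (dvec Δ)) = ⊤ := by
  classical
  rw [eq_top_iff, ← (Pi.basisFun ℝ (FaceIdx Δ)).span_eq, Submodule.span_le]
  rintro _ ⟨F, rfl⟩
  simpa using single_mem_span_dvec Δ F

theorem stmt_2_general {n : ℕ} (Δ : Finset (Finset (Fin n))) :
    affineSpan ℝ (Set.range (dvec Δ)) = ⊤ ∧
    Module.finrank ℝ (vectorSpan ℝ (convexHull ℝ (Set.range (dvec Δ)))) =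
      Fintype.card (FaceIdx Δ) := by
  have hzero : (0 : FaceIdx Δ → ℝ) ∈ Set.range (dvec Δ) := ⟨∅, by ext; simp [dvec]⟩
  have hvec : vectorSpan ℝ (Set.range (dvec Δ)) = ⊤ := by
    simpa [vectorSpan_eq_span_vsub_set_right ℝ hzero] using span_dvec_eq_top Δ
  have haff : affineSpan ℝ (Set.range (dvec Δ)) = ⊤ :=
    (AffineSubspace.affineSpan_eq_top_iff_vectorSpan_eq_top_of_nonempty ℝ _ _ ⟨_, hzero⟩).mpr hvec
  refine ⟨haff, ?_⟩
  rw [← direction_affineSpan, affineSpan_convexHull, haff, AffineSubspace.direction_top,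
    finrank_top, Module.finrank_fintype_fun_eq_card]

/-- `GCut(Δ)` is full-dimensional: the affine span of the points `d^S`
is all of `ℝ^Δ̄`; consequently the dimension of `GCut(Δ)` (the rank of the direction of
its affine span) equals the number of nonempty faces of `Δ`. -/
theorem stmt_2 {n : ℕ} (Δ : Finset (Finset (Fin n)))
    (hΔ : ∀ F ∈ Δ, ∀ G, G ⊆ F → G ∈ Δ) :
    affineSpan ℝ (Set.range (dvec Δ)) = ⊤ ∧
    Module.finrank ℝ (vectorSpan ℝ (convexHull ℝ (Set.range (dvec Δ)))) =
      Fintype.card (FaceIdx Δ) :=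
  stmt_2_general Δ
end

section
/- Let Δ be a simplicial complex on [n] and let I ⊆ [n]. The affine map σ_I : ℝ^Δ̄ → ℝ^Δ̄ defined coordinatewise by (σ_I(x))_F = d^I_F + (−1)^(#(I ∩ F)) x_F is an affine involution of ℝ^Δ̄ that maps GCut(Δ) bijectively onto itself, and it satisfies σ_I(d^S) = d^(S △ I) for every S ⊆ [n]. -/
open Finset
open scoped symmDiff

/-- The switching map `σ_I : ℝ^Δ̄ → ℝ^Δ̄`,
`(σ_I(x))_F = d^I_F + (−1)^(#(I ∩ F)) x_F`. -/
noncomputable def switchMap {n : ℕ} (Δ : Finset (Finset (Fin n))) (I : Finset (Fin n)) :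
    (FaceIdx Δ → ℝ) → (FaceIdx Δ → ℝ) :=
  fun x F => dvec Δ I F + (-1 : ℝ) ^ ((I ∩ F.val).card) * x F

lemma card_symmDiff_parity {α : Type*} [DecidableEq α] (A B : Finset α) :
    (A ∆ B).card + 2 * (A ∩ B).card = A.card + B.card := by
  have h1 : A ∆ B = (A \ B) ∪ (B \ A) := by
    simp [symmDiff_def, Finset.sup_eq_union]
  have hd : Disjoint (A \ B) (B \ A) := by
    exact disjoint_sdiff_sdiff
  have h2 : (A ∆ B).card = (A \ B).card + (B \ A).card := by
    rw [h1, Finset.card_union_of_disjoint hd]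
  have h3 : (A \ B).card + (A ∩ B).card = A.card := Finset.card_sdiff_add_card_inter A B
  have h4 : (B \ A).card + (B ∩ A).card = B.card := Finset.card_sdiff_add_card_inter B A
  rw [Finset.inter_comm B A] at h4
  omega

lemma odd_card_symmDiff {α : Type*} [DecidableEq α] (A B : Finset α) :
    Odd ((A ∆ B).card) ↔ Odd (A.card + B.card) := by
  have := card_symmDiff_parity A B
  constructor <;> intro h <;> rcases h with ⟨k, hk⟩
  · exact ⟨k + (A ∩ B).card, by omega⟩
  · exact ⟨k - (A ∩ B).card, by omega⟩

lemma switch_dvec {n : ℕ} (Δ : Finset (Finset (Fin n))) (I S : Finset (Fin n)) :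
    switchMap Δ I (dvec Δ S) = dvec Δ (S ∆ I) := by
  funext F
  simp only [switchMap, dvec]
  have hdist : F.val ∩ (S ∆ I) = (F.val ∩ S) ∆ (F.val ∩ I) := by
    simpa [Finset.inf_eq_inter] using inf_symmDiff_distrib_left F.val S I
  rw [hdist]
  simp only [odd_card_symmDiff]
  have hc : (I ∩ F.val).card = (F.val ∩ I).card := by rw [Finset.inter_comm]
  rw [hc]
  rcases Nat.even_or_odd (F.val ∩ S).card with hs | hs <;>
    rcases Nat.even_or_odd (F.val ∩ I).card with hi | hi
  · simp [Nat.not_odd_iff_even.2 hs, Nat.not_odd_iff_even.2 hi,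
      Nat.not_odd_iff_even.2 (hs.add hi), hi.neg_one_pow]
  · simp [Nat.not_odd_iff_even.2 hs, hi, hs.add_odd hi, hi.neg_one_pow]
  · simp [hs, Nat.not_odd_iff_even.2 hi, hs.add_even hi, hi.neg_one_pow]
  · simp [hs, hi, Nat.not_odd_iff_even.2 (hs.add_odd hi), hi.neg_one_pow]

/-- The switching map as an affine map. -/
noncomputable def switchAff {n : ℕ} (Δ : Finset (Finset (Fin n))) (I : Finset (Fin n)) :
    (FaceIdx Δ → ℝ) →ᵃ[ℝ] (FaceIdx Δ → ℝ) where
  toFun := switchMap Δ I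
  linear :=
    { toFun := fun x F => (-1 : ℝ) ^ ((I ∩ F.val).card) * x F
      map_add' := by intro x y; funext F; simp [mul_add]
      map_smul' := by intro c x; funext F; simp [smul_eq_mul]; ring }
  map_vadd' := by
    intro p v
    funext F
    simp [switchMap, mul_add]
    ring

/-- `σ_I` is an (affine) involution of `ℝ^Δ̄` mapping `GCut(Δ)` bijectively
onto itself, with `σ_I(d^S) = d^(S △ I)` for every `S ⊆ [n]`. -/
theorem stmt_4 {n : ℕ} (Δ : Finset (Finset (Fin n)))
    (hΔ : ∀ F ∈ Δ, ∀ G, G ⊆ F → G ∈ Δ) (I : Finset (Fin n)) :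
    (∀ x : FaceIdx Δ → ℝ, switchMap Δ I (switchMap Δ I x) = x) ∧
    (switchMap Δ I '' convexHull ℝ (Set.range (dvec Δ)) =
      convexHull ℝ (Set.range (dvec Δ))) ∧
    (∀ S : Finset (Fin n), switchMap Δ I (dvec Δ S) = dvec Δ (S ∆ I)) := by
  refine ⟨?_, ?_, switch_dvec Δ I⟩
  · intro x
    funext F
    simp only [switchMap, dvec]
    rcases Nat.even_or_odd (I ∩ F.val).card with hi | hi
    · have h1 : ¬ Odd (F.val ∩ I).card := by
        rw [Finset.inter_comm]; exact Nat.not_odd_iff_even.2 hi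
      simp [h1, hi.neg_one_pow]
    · rw [if_pos (by rwa [Finset.inter_comm]), hi.neg_one_pow]
      ring
  · have himg : switchMap Δ I '' Set.range (dvec Δ) = Set.range (dvec Δ) := by
      ext y
      constructor
      · rintro ⟨_, ⟨S, rfl⟩, rfl⟩
        exact ⟨S ∆ I, (switch_dvec Δ I S).symm⟩
      · rintro ⟨S, rfl⟩
        refine ⟨dvec Δ (S ∆ I), ⟨S ∆ I, rfl⟩, ?_⟩
        rw [switch_dvec, symmDiff_symmDiff_cancel_right]
    have : switchMap Δ I '' convexHull ℝ (Set.range (dvec Δ)) =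
        convexHull ℝ (switchMap Δ I '' Set.range (dvec Δ)) :=
      (switchAff Δ I).image_convexHull _
    rw [this, himg]
end

section
/- Let Δ be a simplicial complex on [n], let 𝒮 ⊆ 2^[n], and let I ⊆ [n]. If the convex hull of {v^S : S ∈ 𝒮} is an exposed face of the correlation polytope Corr(Δ) (i.e., it is the set of maximizers in Corr(Δ) of some linear functional), then the convex hull of {v^(S △ I) : S ∈ 𝒮} is also an exposed face of Corr(Δ). -/
open Finset
open scoped symmDiff

section Aux
variable {n : ℕ} (Δ : Finset (Finset (Fin n))) (I : Finset (Fin n))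

/-- The linear part of the switching map. -/
noncomputable def Lmap : (FaceIdx Δ → ℝ) →ₗ[ℝ] (FaceIdx Δ → ℝ) where
  toFun x := fun F => ∑ G ∈ (F.val ∩ I).powerset, (-1 : ℝ) ^ G.card *
    (if h : (G ∪ (F.val \ I)) ∈ Δ ∧ (G ∪ (F.val \ I)).Nonempty then x ⟨G ∪ (F.val \ I), h⟩ else 0)
  map_add' x y := by
    funext F
    simp only [Pi.add_apply]
    rw [← Finset.sum_add_distrib]
    refine Finset.sum_congr rfl fun G _ => ?_
    split
    · ring
    · simp
  map_smul' c x := by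
    funext F
    simp only [RingHom.id_apply, Pi.smul_apply, smul_eq_mul]
    rw [Finset.mul_sum]
    refine Finset.sum_congr rfl fun G _ => ?_
    split
    · ring
    · simp

/-- The constant part of the switching map. -/
noncomputable def cvec : FaceIdx Δ → ℝ := fun F => if F.val ⊆ I then 1 else 0

/-- The switching affine map. -/
noncomputable def Tmap : (FaceIdx Δ → ℝ) →ᵃ[ℝ] (FaceIdx Δ → ℝ) :=
  (Lmap Δ I).toAffineMap + AffineMap.const ℝ (FaceIdx Δ → ℝ) (cvec Δ I)

lemma Tmap_apply (x : FaceIdx Δ → ℝ) : Tmap Δ I x = Lmap Δ I x + cvec Δ I := rfl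

end Aux

lemma subset_symmDiff_iff {n : ℕ} (F S I : Finset (Fin n)) :
    F ⊆ S ∆ I ↔ F \ I ⊆ S ∧ F ∩ I ∩ S = ∅ := by
  constructor
  · intro h
    refine ⟨fun a ha => ?_, ?_⟩
    · rw [Finset.mem_sdiff] at ha
      rcases Finset.mem_symmDiff.1 (h ha.1) with h1 | h1
      · exact h1.1
      · exact absurd h1.1 ha.2
    · rw [Finset.eq_empty_iff_forall_notMem]
      intro a ha
      simp only [Finset.mem_inter] at ha
      rcases Finset.mem_symmDiff.1 (h ha.1.1) with h1 | h1
      · exact h1.2 ha.1.2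
      · exact h1.2 ha.2
  · rintro ⟨h1, h2⟩ a ha
    rw [Finset.mem_symmDiff]
    by_cases haI : a ∈ I
    · refine Or.inr ⟨haI, fun haS => ?_⟩
      rw [Finset.eq_empty_iff_forall_notMem] at h2
      exact h2 a (by simp [ha, haI, haS])
    · exact Or.inl ⟨h1 (Finset.mem_sdiff.2 ⟨ha, haI⟩), haI⟩

lemma Tmap_vvec {n : ℕ} (Δ : Finset (Finset (Fin n)))
    (hΔ : ∀ F ∈ Δ, ∀ G, G ⊆ F → G ∈ Δ) (I : Finset (Fin n)) (S : Finset (Fin n)) :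
    Tmap Δ I (vvec Δ S) = vvec Δ (S ∆ I) := by
  classical
  funext F
  rw [Tmap_apply]
  show (∑ G ∈ (F.val ∩ I).powerset, (-1 : ℝ) ^ G.card *
      (if h : (G ∪ (F.val \ I)) ∈ Δ ∧ (G ∪ (F.val \ I)).Nonempty
        then vvec Δ S ⟨G ∪ (F.val \ I), h⟩ else 0)) + (if F.val ⊆ I then 1 else 0)
      = vvec Δ (S ∆ I) F
  have key : ∀ G ∈ (F.val ∩ I).powerset,
      (-1 : ℝ) ^ G.card *
        (if h : (G ∪ (F.val \ I)) ∈ Δ ∧ (G ∪ (F.val \ I)).Nonempty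
          then vvec Δ S ⟨G ∪ (F.val \ I), h⟩ else 0)
      = (if F.val \ I ⊆ S then 1 else 0) * ((-1 : ℝ) ^ G.card * (if G ⊆ S then 1 else 0))
        - (if G = ∅ ∧ F.val ⊆ I then 1 else 0) := by
    intro G hG
    have hGF : G ∪ (F.val \ I) ⊆ F.val :=
      Finset.union_subset ((Finset.mem_powerset.1 hG).trans Finset.inter_subset_left)
        Finset.sdiff_subset
    have hmem : G ∪ (F.val \ I) ∈ Δ := hΔ _ F.2.1 _ hGF
    by_cases hne : (G ∪ (F.val \ I)).Nonempty
    · rw [dif_pos ⟨hmem, hne⟩]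
      have hempty : ¬(G = ∅ ∧ F.val ⊆ I) := by
        rintro ⟨rfl, hFI⟩
        obtain ⟨a, haa⟩ := hne
        simp only [Finset.empty_union, Finset.mem_sdiff] at haa
        exact haa.2 (hFI haa.1)
      rw [if_neg hempty, sub_zero]
      simp only [vvec]
      by_cases h1 : F.val \ I ⊆ S <;> by_cases h2 : G ⊆ S <;>
        simp [Finset.union_subset_iff, h1, h2]
    · rw [dif_neg fun hc => hne hc.2]
      rw [Finset.not_nonempty_iff_eq_empty, Finset.union_eq_empty] at hne
      obtain ⟨rfl, hFI⟩ := hne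
      have hFI' : F.val ⊆ I := by rwa [Finset.sdiff_eq_empty_iff_subset] at hFI
      simp [hFI, hFI']
  rw [Finset.sum_congr rfl key, Finset.sum_sub_distrib]
  have hsum2 : (∑ G ∈ (F.val ∩ I).powerset, if G = ∅ ∧ F.val ⊆ I then (1 : ℝ) else 0)
      = if F.val ⊆ I then 1 else 0 := by
    simp only [ite_and]
    rw [Finset.sum_ite_eq' (F.val ∩ I).powerset ∅ fun _ => if F.val ⊆ I then (1 : ℝ) else 0,
      if_pos (Finset.mem_powerset.2 (Finset.empty_subset _))]
  rw [hsum2, sub_add_cancel, ← Finset.mul_sum]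
  have hsum1 : (∑ G ∈ (F.val ∩ I).powerset, (-1 : ℝ) ^ G.card * (if G ⊆ S then 1 else 0))
      = if F.val ∩ I ∩ S = ∅ then 1 else 0 := by
    simp only [mul_ite, mul_one, mul_zero]
    rw [Finset.sum_ite, Finset.sum_const_zero, add_zero]
    have hfil : (F.val ∩ I).powerset.filter (· ⊆ S) = (F.val ∩ I ∩ S).powerset := by
      ext G
      simp only [Finset.mem_filter, Finset.mem_powerset, Finset.subset_inter_iff]
    rw [hfil]
    exact_mod_cast (Finset.sum_powerset_neg_one_pow_card (x := F.val ∩ I ∩ S))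
  rw [hsum1]
  show _ = if F.val ⊆ S ∆ I then (1 : ℝ) else 0
  by_cases h1 : F.val \ I ⊆ S <;> by_cases h2 : F.val ∩ I ∩ S = ∅ <;>
    simp [subset_symmDiff_iff, h1, h2]


/-- if the convex hull of `{v^S : S ∈ 𝒮}` is an exposed face of `Corr(Δ)`,
then so is the convex hull of `{v^(S △ I) : S ∈ 𝒮}`. -/
theorem stmt_6 {n : ℕ} (Δ : Finset (Finset (Fin n)))
    (hΔ : ∀ F ∈ Δ, ∀ G, G ⊆ F → G ∈ Δ)
    (𝒮 : Set (Finset (Fin n))) (I : Finset (Fin n))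
    (h : IsExposed ℝ (convexHull ℝ (Set.range (vvec Δ)))
      (convexHull ℝ (vvec Δ '' 𝒮))) :
    IsExposed ℝ (convexHull ℝ (Set.range (vvec Δ)))
      (convexHull ℝ (vvec Δ '' ((fun S => S ∆ I) '' 𝒮))) := by
  classical
  intro hB'ne
  set K := convexHull ℝ (Set.range (vvec Δ)) with hK
  set B := convexHull ℝ (vvec Δ '' 𝒮) with hBdef
  -- nonemptiness of B
  obtain ⟨_, ⟨_, ⟨S0, hS0, rfl⟩, rfl⟩⟩ := convexHull_nonempty_iff.1 hB'ne
  obtain ⟨l, hl⟩ := h (Set.Nonempty.convexHull ⟨_, S0, hS0, rfl⟩)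
  set T : (FaceIdx Δ → ℝ) →ᵃ[ℝ] (FaceIdx Δ → ℝ) := Tmap Δ I with hT
  have hTv : ∀ S, T (vvec Δ S) = vvec Δ (S ∆ I) := Tmap_vvec Δ hΔ I
  have hTrange : T '' Set.range (vvec Δ) = Set.range (vvec Δ) := by
    ext x
    constructor
    · rintro ⟨_, ⟨S, rfl⟩, rfl⟩; exact ⟨S ∆ I, (hTv S).symm⟩
    · rintro ⟨S, rfl⟩
      exact ⟨vvec Δ (S ∆ I), ⟨S ∆ I, rfl⟩, by rw [hTv, symmDiff_symmDiff_cancel_right]⟩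
  have hTK : T '' K = K := by rw [hK, AffineMap.image_convexHull, hTrange]
  have hTB : T '' B = convexHull ℝ (vvec Δ '' ((fun S => S ∆ I) '' 𝒮)) := by
    rw [hBdef, AffineMap.image_convexHull]
    congr 1
    ext x
    constructor
    · rintro ⟨_, ⟨S, hS, rfl⟩, rfl⟩; exact ⟨S ∆ I, ⟨S, hS, rfl⟩, (hTv S).symm⟩
    · rintro ⟨_, ⟨S, hS, rfl⟩, rfl⟩; exact ⟨vvec Δ S, ⟨S, hS, rfl⟩, hTv S⟩
  have hInv : ∀ x ∈ K, T (T x) = x := by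
    have hconv : Convex ℝ ((T.comp T - AffineMap.id ℝ (FaceIdx Δ → ℝ)) ⁻¹' {0}) :=
      (convex_singleton (0 : FaceIdx Δ → ℝ)).affine_preimage _
    have hsub : K ⊆ (T.comp T - AffineMap.id ℝ (FaceIdx Δ → ℝ)) ⁻¹' {0} := by
      rw [hK]
      refine convexHull_min ?_ hconv
      rintro _ ⟨S, rfl⟩
      simp only [Set.mem_preimage, Set.mem_singleton_iff, AffineMap.coe_sub, Pi.sub_apply,
        AffineMap.comp_apply, AffineMap.id_apply, sub_eq_zero]
      rw [hTv, hTv, symmDiff_symmDiff_cancel_right]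
    intro x hx
    have := hsub hx
    simpa only [Set.mem_preimage, Set.mem_singleton_iff, AffineMap.coe_sub, Pi.sub_apply,
      AffineMap.comp_apply, AffineMap.id_apply, sub_eq_zero] using this
  set l' : (FaceIdx Δ → ℝ) →L[ℝ] ℝ :=
    LinearMap.toContinuousLinearMap (l.toLinearMap.comp (Lmap Δ I)) with hl'def
  have hl' : ∀ y, (l' y : ℝ) = l (T y) - l (cvec Δ I) := by
    intro y
    have h1 : T y = Lmap Δ I y + cvec Δ I := Tmap_apply Δ I y
    rw [h1, map_add]
    simp only [hl'def, LinearMap.coe_toContinuousLinearMap', LinearMap.coe_comp,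
      Function.comp_apply, ContinuousLinearMap.coe_coe]
    ring
  refine ⟨l', ?_⟩
  ext x
  simp only [Set.mem_setOf_eq]
  constructor
  · intro hx
    rw [← hTB] at hx
    obtain ⟨b, hb, rfl⟩ := hx
    rw [hl] at hb
    obtain ⟨hbK, hbmax⟩ := hb
    refine ⟨by rw [← hTK]; exact ⟨b, hbK, rfl⟩, fun y hy => ?_⟩
    have hTy : T y ∈ K := by rw [← hTK]; exact ⟨y, hy, rfl⟩
    rw [hl' y, hl' (T b), hInv b hbK]
    exact sub_le_sub_right (hbmax _ hTy) _
  · rintro ⟨hxK, hxmax⟩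
    have hTxB : T x ∈ B := by
      rw [hl]
      refine ⟨by rw [← hTK]; exact ⟨x, hxK, rfl⟩, fun z hz => ?_⟩
      rw [← hTK] at hz
      obtain ⟨y, hy, rfl⟩ := hz
      have := hxmax y hy
      rw [hl' y, hl' x] at this
      linarith
    rw [← hTB]
    exact ⟨T x, hTxB, hInv x hxK⟩
end

section
/- Let n ≥ 1 and let Δ = 2^[n] be the full simplex, so Δ̄ is the set of all nonempty subsets of [n]. A point x ∈ ℝ^Δ̄ lies in GCut(2^[n]) if and only if Σ_{∅ ≠ F ⊆ [n]} x_F ≤ 2^(n−1) and, for every nonempty S ⊆ [n], Σ_{∅ ≠ F ⊆ [n]} (−1)^(#(F ∩ S)) x_F ≤ 0. -/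
/-!
Put `walsh S F = (-1)^#(F ∩ S)`, so that `d^S_F = (1 - walsh S F) / 2`. The characters `walsh S`
of `(ℤ/2)^n` are orthogonal on `2^[n]`, so Fourier inversion writes every `x` (with `x_∅ = 0`) as
`x = ∑_S λ_S d^S` with `∑_S λ_S = 1` and `2^n λ_S = 2^n [S = ∅] - 2 ∑_F walsh S F x_F`.
The inequalities of the theorem say exactly that all `λ_S ≥ 0`, i.e. that this is a convex
combination; conversely every `d^S` satisfies them.
-/

open Finset
open scoped symmDiff

/-- The nonempty faces of the full simplex `2^[n]`: all nonempty subsets of `[n]`. -/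
abbrev SimplexFace (n : ℕ) : Type := {F : Finset (Fin n) // F.Nonempty}

/-- The vertex `d^S` of `GCut(2^[n])`. -/
noncomputable def dvecS (n : ℕ) (S : Finset (Fin n)) : SimplexFace n → ℝ :=
  fun F => if Odd ((F.val ∩ S).card) then 1 else 0

section Walsh

variable {ι : Type*} [DecidableEq ι]

noncomputable def walsh (S F : Finset ι) : ℝ := (-1) ^ #(F ∩ S)

lemma walsh_comm (S F : Finset ι) : walsh S F = walsh F S := by
  rw [walsh, walsh, inter_comm]

@[simp]
lemma walsh_empty_left (F : Finset ι) : walsh ∅ F = 1 := by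
  simp [walsh]

@[simp]
lemma walsh_empty_right (S : Finset ι) : walsh S ∅ = 1 := by
  simp [walsh]

lemma walsh_eq_prod (S F : Finset ι) : walsh S F = ∏ i ∈ F, if i ∈ S then -1 else 1 := by
  rw [prod_ite_mem, prod_const, walsh]

lemma walsh_mul_walsh (S T F : Finset ι) : walsh S F * walsh T F = walsh (S ∆ T) F := by
  simp only [walsh_eq_prod, ← prod_mul_distrib, mem_symmDiff]
  refine prod_congr rfl fun i _ => ?_
  by_cases hS : i ∈ S <;> by_cases hT : i ∈ T <;> simp [hS, hT]

variable [Fintype ι]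

lemma sum_walsh (S : Finset ι) :
    ∑ F, walsh S F = if S = ∅ then 2 ^ Fintype.card ι else 0 := by
  have hprod : ∑ F, walsh S F = ∏ i, (1 + if i ∈ S then -1 else 1) := by
    simp only [walsh_eq_prod, prod_one_add, powerset_univ]
  rw [hprod]
  split_ifs with hS
  · simp [hS, one_add_one_eq_two]
  · obtain ⟨i, hi⟩ := nonempty_iff_ne_empty.2 hS
    exact prod_eq_zero (mem_univ i) (by simp [hi])

lemma sum_walsh_mul_walsh (S T : Finset ι) :
    ∑ F, walsh S F * walsh T F = if S = T then 2 ^ Fintype.card ι else 0 := by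
  simp only [walsh_mul_walsh, sum_walsh, ← bot_eq_empty, symmDiff_eq_bot]

end Walsh

section GCut

variable {n : ℕ}

lemma sum_simplexFace (h : Finset (Fin n) → ℝ) (h0 : h ∅ = 0) :
    ∑ F : SimplexFace n, h F.val = ∑ F, h F := by
  rw [← Fintype.sum_subtype_add_sum_subtype Finset.Nonempty h, left_eq_add]
  refine sum_eq_zero fun F _ => ?_
  rw [not_nonempty_iff_eq_empty.1 F.2, h0]

lemma dvecS_eq (S : Finset (Fin n)) (F : SimplexFace n) :
    dvecS n S F = (1 - walsh S F.val) / 2 := by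
  rcases Nat.even_or_odd #(F.val ∩ S) with h | h
  · rw [dvecS, if_neg (Nat.not_odd_iff_even.2 h), walsh, h.neg_one_pow]
    norm_num
  · rw [dvecS, if_pos h, walsh, h.neg_one_pow]
    norm_num

noncomputable def walshCoeff (S : Finset (Fin n)) (x : SimplexFace n → ℝ) : ℝ :=
  ∑ F : SimplexFace n, walsh S F.val * x F

lemma walshCoeff_empty (x : SimplexFace n → ℝ) : walshCoeff ∅ x = ∑ F, x F := by
  simp [walshCoeff]

lemma isLinearMap_walshCoeff (S : Finset (Fin n)) : IsLinearMap ℝ (walshCoeff S) where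
  map_add x y := by simp only [walshCoeff, Pi.add_apply, mul_add, sum_add_distrib]
  map_smul c x := by
    simp only [walshCoeff, Pi.smul_apply, smul_eq_mul, mul_sum, mul_left_comm]

lemma walshCoeff_dvecS (S T : Finset (Fin n)) :
    walshCoeff S (dvecS n T) =
      ((if S = ∅ then 2 ^ n else 0) - if S = T then 2 ^ n else 0) / 2 := by
  calc walshCoeff S (dvecS n T)
      = ∑ F : SimplexFace n, (walsh S F.val - walsh S F.val * walsh T F.val) / 2 := by
        simp only [walshCoeff, dvecS_eq]
        exact sum_congr rfl fun F _ => by ring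
    _ = ∑ F, (walsh S F - walsh S F * walsh T F) / 2 :=
        sum_simplexFace (fun F => (walsh S F - walsh S F * walsh T F) / 2) (by simp)
    _ = _ := by
        rw [← sum_div, sum_sub_distrib, sum_walsh, sum_walsh_mul_walsh, Fintype.card_fin]

lemma sum_walshCoeff (x : SimplexFace n → ℝ) : ∑ S, walshCoeff S x = 0 := by
  simp only [walshCoeff]
  rw [sum_comm]
  refine sum_eq_zero fun F _ => ?_
  simp only [← sum_mul, walsh_comm _ F.val, sum_walsh, if_neg F.2.ne_empty, zero_mul]

lemma sum_walsh_mul_walshCoeff (x : SimplexFace n → ℝ) (G : SimplexFace n) :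
    ∑ S, walsh S G.val * walshCoeff S x = 2 ^ n * x G := by
  simp only [walshCoeff, mul_sum]
  rw [sum_comm]
  calc ∑ F : SimplexFace n, ∑ S, walsh S G.val * (walsh S F.val * x F)
      = ∑ F : SimplexFace n, (if G = F then 2 ^ n else 0) * x F := by
        refine sum_congr rfl fun F _ => ?_
        simp only [← mul_assoc, ← sum_mul, walsh_comm _ G.val, walsh_comm _ F.val,
          sum_walsh_mul_walsh, Fintype.card_fin, Subtype.ext_iff]
    _ = 2 ^ n * x G := by simp

def cutInequalities (n : ℕ) : Set (SimplexFace n → ℝ) :=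
  {x | ∀ S, 2 * walshCoeff S x ≤ if S = ∅ then 2 ^ n else 0}

lemma convex_cutInequalities : Convex ℝ (cutInequalities n) := by
  simp only [cutInequalities, Set.ofPred_forall]
  refine convex_iInter fun S => ?_
  simpa only [le_div_iff₀' (two_pos : (0 : ℝ) < 2)] using
    convex_halfSpace_le (isLinearMap_walshCoeff S) ((if S = ∅ then 2 ^ n else 0) / 2)

lemma dvecS_mem_cutInequalities (T : Finset (Fin n)) : dvecS n T ∈ cutInequalities n := by
  intro S
  rw [walshCoeff_dvecS, mul_div_cancel₀ _ two_ne_zero, sub_le_self_iff]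
  split_ifs <;> positivity

noncomputable def cutWeight (x : SimplexFace n → ℝ) (S : Finset (Fin n)) : ℝ :=
  ((if S = ∅ then 2 ^ n else 0) - 2 * walshCoeff S x) / 2 ^ n

lemma sum_cutWeight (x : SimplexFace n → ℝ) : ∑ S, cutWeight x S = 1 := by
  simp only [cutWeight, ← sum_div, sum_sub_distrib, ← mul_sum, sum_walshCoeff, sum_ite_eq',
    mem_univ, if_true, mul_zero, sub_zero]
  exact div_self (by positivity)

lemma sum_cutWeight_mul_walsh (x : SimplexFace n → ℝ) (G : SimplexFace n) :
    ∑ S, cutWeight x S * walsh S G.val = 1 - 2 * x G := by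
  have h2n : (2 : ℝ) ^ n ≠ 0 := by positivity
  calc ∑ S, cutWeight x S * walsh S G.val
      = (∑ S, (if S = ∅ then 2 ^ n else 0) * walsh S G.val
          - 2 * ∑ S, walsh S G.val * walshCoeff S x) / 2 ^ n := by
        simp only [cutWeight, div_mul_eq_mul_div, ← sum_div, sub_mul, sum_sub_distrib, mul_sum]
        congr 2
        exact sum_congr rfl fun S _ => by ring
    _ = 1 - 2 * x G := by
        rw [sum_walsh_mul_walshCoeff]
        simp only [ite_mul, zero_mul, sum_ite_eq', mem_univ, if_true, walsh_empty_left]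
        field_simp

lemma sum_cutWeight_smul_dvecS (x : SimplexFace n → ℝ) :
    ∑ S, cutWeight x S • dvecS n S = x := by
  funext G
  have hsum := sum_cutWeight x
  have hwalsh := sum_cutWeight_mul_walsh x G
  simp only [Finset.sum_apply, Pi.smul_apply, smul_eq_mul, dvecS_eq, mul_div_assoc', mul_sub, mul_one,
    ← sum_div, sum_sub_distrib, hsum, hwalsh]
  ring

lemma cutInequalities_subset_convexHull :
    cutInequalities n ⊆ convexHull ℝ (Set.range (dvecS n)) := by
  intro x hx
  have hw : ∀ S, 0 ≤ cutWeight x S := fun S =>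
    div_nonneg (sub_nonneg.2 (hx S)) (by positivity)
  have hx_eq : univ.centerMass (cutWeight x) (dvecS n) = x := by
    rw [centerMass_eq_of_sum_1 _ _ (sum_cutWeight x), sum_cutWeight_smul_dvecS]
  rw [← hx_eq]
  exact centerMass_mem_convexHull _ (fun S _ => hw S) (by rw [sum_cutWeight]; exact one_pos)
    (fun S _ => Set.mem_range_self S)

lemma convexHull_dvecS : convexHull ℝ (Set.range (dvecS n)) = cutInequalities n :=
  (convexHull_min (Set.range_subset_iff.2 dvecS_mem_cutInequalities)
    convex_cutInequalities).antisymm cutInequalities_subset_convexHull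

end GCut

/-- `x ∈ GCut(2^[n])` iff `Σ_F x_F ≤ 2^(n−1)` and, for every nonempty
`S ⊆ [n]`, `Σ_F (−1)^(#(F ∩ S)) x_F ≤ 0`. -/
theorem stmt_7 (n : ℕ) (hn : 1 ≤ n) (x : SimplexFace n → ℝ) :
    x ∈ convexHull ℝ (Set.range (dvecS n)) ↔
      (∑ F : SimplexFace n, x F ≤ 2 ^ (n - 1)) ∧
      (∀ S : Finset (Fin n), S.Nonempty →
        ∑ F : SimplexFace n, (-1 : ℝ) ^ ((F.val ∩ S).card) * x F ≤ 0) := by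
  have h2n : (2 : ℝ) ^ n = 2 * 2 ^ (n - 1) := by
    rw [← pow_succ', Nat.sub_add_cancel hn]
  rw [convexHull_dvecS]
  constructor
  · intro hx
    refine ⟨?_, fun S hS => ?_⟩
    · have h := hx ∅
      rw [if_pos rfl, walshCoeff_empty] at h
      linarith
    · have h := hx S
      rw [if_neg hS.ne_empty] at h
      exact nonpos_of_mul_nonpos_right h two_pos
  · rintro ⟨hsum, hS⟩ S
    split_ifs with h
    · rw [h, walshCoeff_empty]
      linarith
    · have h' : walshCoeff S x ≤ 0 := hS S (nonempty_iff_ne_empty.2 h)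
      linarith
end

section
/- Let n ≥ 2 and 1 ≤ k ≤ n, and let S ⊆ [k] with #S odd. Then: (i) for every T ⊆ [n] with T ∉ {∅, S}, the number of faces A ∈ 𝕋̄_n^k with #(A ∩ S) even and #(A ∩ T) odd equals 2^(n−2); equivalently c^S · d^T = 2^(n−2); and (ii) c^S · d^∅ = c^S · d^S = 0. In particular, the inequality c^S · x ≤ 2^(n−2) is valid on GCut(𝕋_n^k). -/
/-!
Toggling a point `v` (`A ↦ A ∆ {v}`) flips the parity of `#(A ∩ X)` exactly when `v ∈ X`.
For `S ≠ T` nonempty, toggling a point of `S ∆ T` flips one of the parities of `#(A ∩ S)`,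
`#(A ∩ T)` and keeps the other, so each of the four parity classes contains `2^(n-2)` of the
`2^n` subsets of `[n]`. A set with `#(A ∩ T)` odd is nonempty, and one with `#(A ∩ S)` even
cannot contain the odd set `S ⊆ [k]`, so every set of the class (even, odd) is a face of
`𝕋_n^k`; and `c^S · d^T` counts exactly the faces of this class.
-/

open Finset

/-- The nonempty faces of the turtle complex `𝕋_n^k`. -/
abbrev TFace (n k : ℕ) : Type :=
  {F : Finset (Fin n) // F.Nonempty ∧ ∃ i : Fin n, i.val < k ∧ i ∉ F}

/-- The vertex `d^S` of `GCut(𝕋_n^k)`. -/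
noncomputable def dvecT (n k : ℕ) (S : Finset (Fin n)) : TFace n k → ℝ :=
  fun F => if Odd ((F.val ∩ S).card) then 1 else 0

/-- The linear functional `c^S`: `c^S_F = 0` if `#(S ∩ F)` is odd, `1` if even. -/
noncomputable def cvecT (n k : ℕ) (S : Finset (Fin n)) : TFace n k → ℝ :=
  fun F => if Odd ((S ∩ F.val).card) then 0 else 1

open scoped symmDiff

section Toggle

variable {α : Type*} [DecidableEq α]

theorem Finset.card_symmDiff_add_two_mul_card_inter (s t : Finset α) :
    #(s ∆ t) + 2 * #(s ∩ t) = #s + #t := by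
  rw [symmDiff_eq_sup_sdiff_inf, sup_eq_union, inf_eq_inter,
    card_sdiff_of_subset inter_subset_union, ← card_union_add_card_inter s t]
  have := card_le_card (inter_subset_union (s := s) (t := t))
  omega

theorem Finset.inter_symmDiff_singleton_of_notMem {v : α} {X : Finset α} (hv : v ∉ X)
    (A : Finset α) : (A ∆ {v}) ∩ X = A ∩ X := by
  ext x
  simp only [mem_inter, mem_symmDiff, mem_singleton]
  grind

theorem Finset.odd_card_symmDiff_singleton_inter_iff {v : α} {X : Finset α} (hv : v ∈ X)
    (A : Finset α) : Odd #((A ∆ {v}) ∩ X) ↔ Even #(A ∩ X) := by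
  have hinter : (A ∆ {v}) ∩ X = (A ∩ X) ∆ {v} := by
    ext x
    simp only [mem_inter, mem_symmDiff, mem_singleton]
    grind
  have hcard := card_symmDiff_add_two_mul_card_inter (A ∩ X) {v}
  rw [card_singleton] at hcard
  rw [hinter, Nat.odd_iff, Nat.even_iff]
  omega

theorem Finset.card_filter_odd_card_inter_eq_card_filter_even {s : Finset (Finset α)} {v : α}
    (hs : ∀ A ∈ s, A ∆ {v} ∈ s) {X : Finset α} (hv : v ∈ X) :
    #{A ∈ s | Odd #(A ∩ X)} = #{A ∈ s | Even #(A ∩ X)} := by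
  refine card_nbij' (· ∆ {v}) (· ∆ {v}) ?_ ?_ (fun A _ ↦ symmDiff_symmDiff_cancel_right _ _)
    (fun A _ ↦ symmDiff_symmDiff_cancel_right _ _)
  · intro A hA
    simp only [coe_filter, Set.mem_ofPred_eq] at hA ⊢
    rw [← odd_card_symmDiff_singleton_inter_iff hv, symmDiff_symmDiff_cancel_right]
    exact ⟨hs A hA.1, hA.2⟩
  · intro A hA
    simp only [coe_filter, Set.mem_ofPred_eq] at hA ⊢
    exact ⟨hs A hA.1, (odd_card_symmDiff_singleton_inter_iff hv A).2 hA.2⟩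

theorem Finset.two_mul_card_filter_odd_card_inter {s : Finset (Finset α)} {v : α}
    (hs : ∀ A ∈ s, A ∆ {v} ∈ s) {X : Finset α} (hv : v ∈ X) :
    2 * #{A ∈ s | Odd #(A ∩ X)} = #s := by
  have hsplit := card_filter_add_card_filter_not (s := s) (fun A ↦ Odd #(A ∩ X))
  simp only [Nat.not_odd_iff_even] at hsplit
  rw [← card_filter_odd_card_inter_eq_card_filter_even hs hv] at hsplit
  omega

theorem Finset.two_mul_card_filter_even_card_inter {s : Finset (Finset α)} {v : α}
    (hs : ∀ A ∈ s, A ∆ {v} ∈ s) {X : Finset α} (hv : v ∈ X) :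
    2 * #{A ∈ s | Even #(A ∩ X)} = #s := by
  rw [← card_filter_odd_card_inter_eq_card_filter_even hs hv,
    two_mul_card_filter_odd_card_inter hs hv]

variable [Fintype α]

theorem Finset.two_mul_card_filter_even_card_inter_univ {X : Finset α} (hX : X.Nonempty) :
    2 * #{A : Finset α | Even #(A ∩ X)} = 2 ^ Fintype.card α := by
  obtain ⟨v, hv⟩ := hX
  rw [two_mul_card_filter_even_card_inter (fun A _ ↦ mem_univ _) hv, card_univ,
    Fintype.card_finset]

theorem Finset.two_mul_card_filter_odd_card_inter_univ {X : Finset α} (hX : X.Nonempty) :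
    2 * #{A : Finset α | Odd #(A ∩ X)} = 2 ^ Fintype.card α := by
  obtain ⟨v, hv⟩ := hX
  rw [two_mul_card_filter_odd_card_inter (fun A _ ↦ mem_univ _) hv, card_univ,
    Fintype.card_finset]

theorem Finset.four_mul_card_filter_even_odd {S T : Finset α} (hS : S.Nonempty)
    (hT : T.Nonempty) (hST : S ≠ T) :
    4 * #{A : Finset α | Even #(A ∩ S) ∧ Odd #(A ∩ T)} = 2 ^ Fintype.card α := by
  obtain ⟨v, hv⟩ := symmDiff_nonempty.2 hST
  rcases mem_symmDiff.1 hv with ⟨hvS, hvT⟩ | ⟨hvT, hvS⟩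
  · have := two_mul_card_filter_even_card_inter (s := {A : Finset α | Odd #(A ∩ T)})
      (fun A hA ↦ by simpa [inter_symmDiff_singleton_of_notMem hvT] using hA) hvS
    rw [filter_filter] at this
    simp_rw [and_comm (a := Even _)]
    rw [← two_mul_card_filter_odd_card_inter_univ hT, ← this]
    ring
  · have := two_mul_card_filter_odd_card_inter (s := {A : Finset α | Even #(A ∩ S)})
      (fun A hA ↦ by simpa [inter_symmDiff_singleton_of_notMem hvS] using hA) hvT
    rw [filter_filter] at this
    rw [← two_mul_card_filter_even_card_inter_univ hS, ← this]
    ring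

end Toggle

theorem Finset.card_filter_subtype_val {β : Type*} [Fintype β] {Q P : β → Prop}
    [Fintype {b // Q b}] [DecidablePred P] (hPQ : ∀ b, P b → Q b) :
    #{x : {b // Q b} | P x.val} = #{b | P b} := by
  refine card_bij (fun x _ ↦ x.val) (fun x hx ↦ by simpa using hx)
    (fun _ _ _ _ ↦ Subtype.ext) (fun b hb ↦ ?_)
  rw [mem_filter] at hb
  exact ⟨⟨b, hPQ b hb.2⟩, by simpa using hb.2, rfl⟩

theorem sum_mul_le_of_mem_convexHull {ι : Type*} [Fintype ι] {c : ι → ℝ} {s : Set (ι → ℝ)}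
    {r : ℝ} (h : ∀ y ∈ s, ∑ i, c i * y i ≤ r) {x : ι → ℝ} (hx : x ∈ convexHull ℝ s) :
    ∑ i, c i * x i ≤ r :=
  convexHull_min h (convex_halfSpace_le (dotProductBilin ℝ ℝ c).isLinear r) hx

section Turtle

variable {n k : ℕ} {S T : Finset (Fin n)}

theorem mem_tFace_of_even_inter_of_odd_inter (hS : ∀ i ∈ S, i.val < k) (hSodd : Odd #S)
    {A : Finset (Fin n)} (hAS : Even #(A ∩ S)) (hAT : Odd #(A ∩ T)) :
    A.Nonempty ∧ ∃ i : Fin n, i.val < k ∧ i ∉ A := by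
  refine ⟨(card_pos.1 hAT.pos).mono inter_subset_left, ?_⟩
  by_contra! hA
  rw [inter_eq_right.2 fun i hi ↦ hA i (hS i hi)] at hAS
  exact Nat.not_even_iff_odd.2 hSodd hAS

theorem cvecT_mul_dvecT (F : TFace n k) :
    cvecT n k S F * dvecT n k T F =
      if Even #(F.val ∩ S) ∧ Odd #(F.val ∩ T) then 1 else 0 := by
  unfold cvecT dvecT
  rw [inter_comm S]
  by_cases hS : Odd #(F.val ∩ S) <;> by_cases hT : Odd #(F.val ∩ T) <;>
    simp [hS, hT, ← Nat.not_odd_iff_even]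

theorem sum_cvecT_mul_dvecT :
    ∑ F : TFace n k, cvecT n k S F * dvecT n k T F =
      #{F : TFace n k | Even #(F.val ∩ S) ∧ Odd #(F.val ∩ T)} := by
  simp_rw [cvecT_mul_dvecT, sum_boole]

theorem card_filter_tFace_even_odd (hn : 2 ≤ n) (hS : ∀ i ∈ S, i.val < k) (hSodd : Odd #S)
    (hT : T ≠ ∅) (hTS : T ≠ S) :
    #{F : TFace n k | Even #(F.val ∩ S) ∧ Odd #(F.val ∩ T)} = 2 ^ (n - 2) := by
  rw [card_filter_subtype_val (P := fun A ↦ Even #(A ∩ S) ∧ Odd #(A ∩ T))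
    fun A hA ↦ mem_tFace_of_even_inter_of_odd_inter hS hSodd hA.1 hA.2]
  have h := four_mul_card_filter_even_odd (card_pos.1 hSodd.pos) (nonempty_iff_ne_empty.2 hT)
    hTS.symm
  rw [Fintype.card_fin, ← pow_sub_mul_pow 2 hn] at h
  omega

end Turtle

theorem stmt_10_general (n k : ℕ) (hn : 2 ≤ n)
    (S : Finset (Fin n)) (hS : ∀ i ∈ S, i.val < k) (hSodd : Odd S.card) :
    (∀ T : Finset (Fin n), T ≠ ∅ → T ≠ S →
      (Finset.univ.filter (fun F : TFace n k =>
          Even ((F.val ∩ S).card) ∧ Odd ((F.val ∩ T).card))).card = 2 ^ (n - 2)) ∧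
    (∀ T : Finset (Fin n), T ≠ ∅ → T ≠ S →
      ∑ F : TFace n k, cvecT n k S F * dvecT n k T F = 2 ^ (n - 2)) ∧
    (∑ F : TFace n k, cvecT n k S F * dvecT n k ∅ F = 0) ∧
    (∑ F : TFace n k, cvecT n k S F * dvecT n k S F = 0) ∧
    (∀ x ∈ convexHull ℝ (Set.range (dvecT n k)),
      ∑ F : TFace n k, cvecT n k S F * x F ≤ 2 ^ (n - 2)) := by
  have hcount T (hT : T ≠ ∅) (hTS : T ≠ S) :=
    card_filter_tFace_even_odd (k := k) hn hS hSodd hT hTS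
  have hsum T (hT : T ≠ ∅) (hTS : T ≠ S) :
      ∑ F : TFace n k, cvecT n k S F * dvecT n k T F = 2 ^ (n - 2) := by
    rw [sum_cvecT_mul_dvecT, hcount T hT hTS]
    norm_num
  have hsum_empty : ∑ F : TFace n k, cvecT n k S F * dvecT n k ∅ F = 0 := by
    simp [sum_cvecT_mul_dvecT]
  have hsum_self : ∑ F : TFace n k, cvecT n k S F * dvecT n k S F = 0 := by
    simp [sum_cvecT_mul_dvecT, ← Nat.not_odd_iff_even]
  refine ⟨hcount, hsum, hsum_empty, hsum_self, fun x hx ↦ sum_mul_le_of_mem_convexHull ?_ hx⟩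
  rintro _ ⟨T, rfl⟩
  by_cases hT : T = ∅
  · simp [hT, hsum_empty]
  by_cases hTS : T = S
  · simp [hTS, hsum_self]
  exact (hsum T hT hTS).le

/-- for `S ⊆ [k]` with `#S` odd: (i) for every `T ∉ {∅, S}` the number
of faces `F ∈ 𝕋̄_n^k` with `#(F ∩ S)` even and `#(F ∩ T)` odd equals `2^(n−2)`,
equivalently `c^S · d^T = 2^(n−2)`; (ii) `c^S · d^∅ = c^S · d^S = 0`; in particular
`c^S · x ≤ 2^(n−2)` is valid on `GCut(𝕋_n^k)`. -/
theorem stmt_10 (n k : ℕ) (hn : 2 ≤ n) (hk1 : 1 ≤ k) (hkn : k ≤ n)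
    (S : Finset (Fin n)) (hS : ∀ i ∈ S, i.val < k) (hSodd : Odd S.card) :
    (∀ T : Finset (Fin n), T ≠ ∅ → T ≠ S →
      (Finset.univ.filter (fun F : TFace n k =>
          Even ((F.val ∩ S).card) ∧ Odd ((F.val ∩ T).card))).card = 2 ^ (n - 2)) ∧
    (∀ T : Finset (Fin n), T ≠ ∅ → T ≠ S →
      ∑ F : TFace n k, cvecT n k S F * dvecT n k T F = 2 ^ (n - 2)) ∧
    (∑ F : TFace n k, cvecT n k S F * dvecT n k ∅ F = 0) ∧
    (∑ F : TFace n k, cvecT n k S F * dvecT n k S F = 0) ∧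
    (∀ x ∈ convexHull ℝ (Set.range (dvecT n k)),
      ∑ F : TFace n k, cvecT n k S F * x F ≤ 2 ^ (n - 2)) :=
  stmt_10_general n k hn S hS hSodd
end

section
/- Let n ≥ 2 and 1 ≤ k ≤ n. A point x ∈ ℝ^(𝕋̄_n^k) lies in GCut(𝕋_n^k) if and only if for every S ⊆ [k] with #S odd and every J ⊆ [n] with #J even, Σ_{F ∈ 𝕋̄_n^k} (−1)^(#(J ∩ F)) c^S_F x_F ≤ 2^(n−2) − Σ_{F ∈ 𝕋̄_n^k} c^S_F d^J_F. (This is the complete H-representation of the generalized cut polytope of the turtle complex, obtained by switching the inequalities c^S · x ≤ 2^(n−2) with respect to sets of even cardinality.) -/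
open Finset

open scoped symmDiff

namespace Stmt11

variable {n k : ℕ}

/-- `[k]` inside `Fin n`. -/
def KS (n k : ℕ) : Finset (Fin n) := univ.filter (fun i => i.val < k)

/-- complement of `[k]` inside `Fin n`. -/
def RS (n k : ℕ) : Finset (Fin n) := univ.filter (fun i => ¬ i.val < k)

noncomputable def chp (A W : Finset (Fin n)) : ℝ :=
  ∏ i ∈ W, (if i ∈ A then (-1 : ℝ) else 1)

lemma chp_eq (A W : Finset (Fin n)) : chp A W = (-1 : ℝ) ^ ((A ∩ W).card) := by
  unfold chp
  rw [← Finset.prod_filter_mul_prod_filter_not W (· ∈ A)]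
  have h1 : ∀ i ∈ W.filter (· ∈ A), (if i ∈ A then (-1:ℝ) else 1) = -1 := by
    intro i hi; simp only [mem_filter] at hi; simp [hi.2]
  have h2 : ∀ i ∈ W.filter (fun i => ¬ i ∈ A), (if i ∈ A then (-1:ℝ) else 1) = 1 := by
    intro i hi; simp only [mem_filter] at hi; simp [hi.2]
  rw [Finset.prod_congr rfl h1, Finset.prod_congr rfl h2, Finset.prod_const,
    Finset.prod_const, one_pow, mul_one]
  congr 1
  rw [Finset.filter_mem_eq_inter, Finset.inter_comm]

lemma chp_comm (A W : Finset (Fin n)) : chp A W = chp W A := by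
  rw [chp_eq, chp_eq, Finset.inter_comm]

lemma chp_mul (A B W : Finset (Fin n)) : chp A W * chp B W = chp (A ∆ B) W := by
  unfold chp
  rw [← Finset.prod_mul_distrib]
  refine Finset.prod_congr rfl fun i _ => ?_
  by_cases hA : i ∈ A <;> by_cases hB : i ∈ B <;>
    simp [Finset.mem_symmDiff, hA, hB]

lemma chp_empty (W : Finset (Fin n)) : chp ∅ W = 1 := by
  unfold chp; simp

lemma chp_empty' (A : Finset (Fin n)) : chp A ∅ = 1 := by
  unfold chp; simp

lemma chp_union (A : Finset (Fin n)) {W₁ W₂ : Finset (Fin n)} (h : Disjoint W₁ W₂) :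
    chp A (W₁ ∪ W₂) = chp A W₁ * chp A W₂ :=
  Finset.prod_union h

lemma chp_congr_subset {W X : Finset (Fin n)} (A : Finset (Fin n)) (h : W ⊆ X) :
    chp A W = chp (A ∩ X) W := by
  unfold chp
  refine Finset.prod_congr rfl fun i hi => ?_
  have : i ∈ A ↔ i ∈ A ∩ X := by simp [Finset.mem_inter, h hi]
  simp only [this]

lemma sum_chp {T X : Finset (Fin n)} (h : T ⊆ X) :
    ∑ W ∈ X.powerset, chp T W = if T = ∅ then (2 : ℝ) ^ X.card else 0 := by
  have hpa := Finset.prod_add (fun i : Fin n => if i ∈ T then (-1:ℝ) else 1)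
    (fun _ => (1:ℝ)) X
  simp only [Finset.prod_const_one, mul_one] at hpa
  unfold chp
  rw [← hpa]
  by_cases hT : T = ∅
  · subst hT
    rw [if_pos rfl]
    have : ∀ i ∈ X, (if i ∈ (∅ : Finset (Fin n)) then (-1:ℝ) else 1) + 1 = 2 := by
      intro i _; simp; norm_num
    rw [Finset.prod_congr rfl this, Finset.prod_const]
  · rw [if_neg hT]
    obtain ⟨i₀, hi₀⟩ := Finset.nonempty_iff_ne_empty.mpr hT
    refine Finset.prod_eq_zero (h hi₀) ?_
    simp [hi₀]

lemma sum_pow_union {s t : Finset (Fin n)} (h : Disjoint s t) (g : Finset (Fin n) → ℝ) :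
    ∑ W ∈ (s ∪ t).powerset, g W = ∑ A ∈ s.powerset, ∑ B ∈ t.powerset, g (A ∪ B) := by
  have hrecomb : ∀ W ∈ (s ∪ t).powerset, W ∩ s ∪ W ∩ t = W := by
    intro W hW
    simp only [Finset.mem_powerset] at hW
    ext i
    simp only [Finset.mem_union, Finset.mem_inter]
    constructor
    · rintro (⟨h1, _⟩ | ⟨h1, _⟩) <;> exact h1
    · intro hi
      rcases Finset.mem_union.mp (hW hi) with h1 | h1
      · exact Or.inl ⟨hi, h1⟩
      · exact Or.inr ⟨hi, h1⟩
  have hsplit : ∀ p : Finset (Fin n) × Finset (Fin n),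
      p ∈ s.powerset ×ˢ t.powerset → (p.1 ∪ p.2) ∩ s = p.1 ∧ (p.1 ∪ p.2) ∩ t = p.2 := by
    intro p hp
    simp only [Finset.mem_product, Finset.mem_powerset] at hp
    have h1 : p.1 ∩ t = ∅ :=
      Finset.disjoint_iff_inter_eq_empty.mp (h.mono_left hp.1)
    have h2 : p.2 ∩ s = ∅ :=
      Finset.disjoint_iff_inter_eq_empty.mp (h.symm.mono_left hp.2)
    constructor
    · rw [Finset.union_inter_distrib_right, Finset.inter_eq_left.mpr hp.1, h2,
        Finset.union_empty]
    · rw [Finset.union_inter_distrib_right, h1, Finset.inter_eq_left.mpr hp.2,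
        Finset.empty_union]
  have hprod := Finset.sum_product' s.powerset t.powerset (fun A B => g (A ∪ B))
  rw [← hprod]
  refine Finset.sum_nbij' (fun W => (W ∩ s, W ∩ t)) (fun p => p.1 ∪ p.2) ?_ ?_ ?_ ?_ ?_
  · intro W hW
    simp only [Finset.mem_product, Finset.mem_powerset]
    exact ⟨Finset.inter_subset_right, Finset.inter_subset_right⟩
  · intro p hp
    simp only [Finset.mem_product, Finset.mem_powerset] at hp ⊢
    exact Finset.union_subset (hp.1.trans Finset.subset_union_left)
      (hp.2.trans Finset.subset_union_right)
  · intro W hW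
    exact hrecomb W hW
  · intro p hp
    have := hsplit p hp
    rw [Prod.ext_iff]
    exact this
  · intro W hW
    rw [hrecomb W hW]

lemma KS_union_RS : KS n k ∪ RS n k = univ := by
  unfold KS RS
  rw [Finset.filter_union_filter_not_eq]

lemma KS_disjoint_RS : Disjoint (KS n k) (RS n k) := by
  rw [Finset.disjoint_left]
  intro i hi hi'
  simp only [KS, RS, mem_filter] at hi hi'
  exact hi'.2 hi.2

lemma mem_KS {i : Fin n} : i ∈ KS n k ↔ i.val < k := by
  simp [KS]

lemma mem_RS {i : Fin n} : i ∈ RS n k ↔ ¬ i.val < k := by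
  simp [RS]

lemma card_KS (hkn : k ≤ n) : (KS n k).card = k := by
  have h : (KS n k).image Fin.val = Finset.range k := by
    ext m
    simp only [Finset.mem_image, Finset.mem_range, mem_KS]
    constructor
    · rintro ⟨i, hi, rfl⟩; exact hi
    · intro hm; exact ⟨⟨m, lt_of_lt_of_le hm hkn⟩, hm, rfl⟩
  calc (KS n k).card = ((KS n k).image Fin.val).card :=
        (Finset.card_image_of_injective _ Fin.val_injective).symm
    _ = k := by rw [h, Finset.card_range]

lemma card_RS (hkn : k ≤ n) : (RS n k).card = n - k := by
  have h : RS n k = univ \ KS n k := by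
    unfold KS RS
    rw [Finset.sdiff_eq_filter]
    exact Finset.filter_congr fun i _ => by simp
  rw [h, Finset.card_sdiff_of_subset (Finset.subset_univ _), card_KS hkn, Finset.card_univ,
    Fintype.card_fin]

lemma KS_nonempty (hk1 : 1 ≤ k) (hn0 : 0 < n) : (KS n k).Nonempty :=
  ⟨⟨0, hn0⟩, mem_KS.mpr hk1⟩

/-- The predicate defining turtle faces. -/
def FP (n k : ℕ) (F : Finset (Fin n)) : Prop :=
  F.Nonempty ∧ ∃ i : Fin n, i.val < k ∧ i ∉ F

instance : DecidablePred (FP n k) := fun F => by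
  unfold FP; infer_instance

lemma not_FP_iff (F : Finset (Fin n)) : ¬ FP n k F ↔ F = ∅ ∨ KS n k ⊆ F := by
  unfold FP
  rw [Finset.nonempty_iff_ne_empty]
  constructor
  · intro h
    by_cases hF : F = ∅
    · exact Or.inl hF
    · refine Or.inr fun i hi => ?_
      by_contra hiF
      exact h ⟨hF, i, mem_KS.mp hi, hiF⟩
  · rintro (rfl | hKF) ⟨h1, i, hik, hiF⟩
    · exact h1 rfl
    · exact hiF (hKF (mem_KS.mpr hik))

lemma sum_faces (hk1 : 1 ≤ k) (hn0 : 0 < n) (g : Finset (Fin n) → ℝ) :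
    ∑ F : TFace n k, g F.val =
      (∑ F ∈ (univ : Finset (Fin n)).powerset, g F) - g ∅ -
        ∑ G ∈ (RS n k).powerset, g (KS n k ∪ G) := by
  have hmem : ∀ F : Finset (Fin n),
      F ∈ (univ : Finset (Fin n)).powerset.filter (FP n k) ↔
        (F.Nonempty ∧ ∃ i : Fin n, i.val < k ∧ i ∉ F) := by
    intro F
    simp only [Finset.mem_filter, Finset.mem_powerset]
    constructor
    · intro h; exact h.2
    · intro h; exact ⟨Finset.subset_univ _, h⟩
  have hsub : ∑ F : TFace n k, g F.val =
      ∑ F ∈ (univ : Finset (Fin n)).powerset.filter (FP n k), g F :=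
    (Finset.sum_subtype _ hmem g).symm
  rw [hsub]
  have hnot : (univ : Finset (Fin n)).powerset.filter (fun F => ¬ FP n k F) =
      insert ∅ ((RS n k).powerset.image (fun G => KS n k ∪ G)) := by
    ext F
    simp only [Finset.mem_filter, Finset.mem_powerset, Finset.mem_insert, Finset.mem_image,
      Finset.subset_univ, true_and, not_FP_iff]
    constructor
    · rintro (rfl | hKF)
      · exact Or.inl rfl
      · refine Or.inr ⟨F ∩ RS n k, Finset.inter_subset_right, ?_⟩
        ext i
        simp only [Finset.mem_union, Finset.mem_inter, mem_KS, mem_RS]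
        constructor
        · rintro (hik | ⟨hiF, _⟩)
          · exact hKF (mem_KS.mpr hik)
          · exact hiF
        · intro hiF
          by_cases hik : i.val < k
          · exact Or.inl hik
          · exact Or.inr ⟨hiF, hik⟩
    · rintro (rfl | ⟨G, _, rfl⟩)
      · exact Or.inl rfl
      · exact Or.inr Finset.subset_union_left
  have hne0 : ∅ ∉ (RS n k).powerset.image (fun G => KS n k ∪ G) := by
    simp only [Finset.mem_image, Finset.mem_powerset]
    rintro ⟨G, _, hG⟩
    have hne := KS_nonempty (n := n) (k := k) hk1 hn0
    obtain ⟨i, hi⟩ := hne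
    have : i ∈ (∅ : Finset (Fin n)) := hG ▸ Finset.mem_union_left _ hi
    simp at this
  have hinj : ∀ G₁ ∈ (RS n k).powerset, ∀ G₂ ∈ (RS n k).powerset,
      KS n k ∪ G₁ = KS n k ∪ G₂ → G₁ = G₂ := by
    intro G₁ h1 G₂ h2 heq
    simp only [Finset.mem_powerset] at h1 h2
    have key : ∀ G, G ⊆ RS n k → (KS n k ∪ G) ∩ RS n k = G := by
      intro G hG
      rw [Finset.union_inter_distrib_right,
        Finset.disjoint_iff_inter_eq_empty.mp KS_disjoint_RS,
        Finset.inter_eq_left.mpr hG, Finset.empty_union]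
    rw [← key G₁ h1, ← key G₂ h2, heq]
  have htot := Finset.sum_filter_add_sum_filter_not
    ((univ : Finset (Fin n)).powerset) (FP n k) g
  have hbad : ∑ F ∈ (univ : Finset (Fin n)).powerset.filter (fun F => ¬ FP n k F), g F =
      g ∅ + ∑ G ∈ (RS n k).powerset, g (KS n k ∪ G) := by
    rw [hnot, Finset.sum_insert hne0, Finset.sum_image hinj]
  linarith

lemma Esum (hk1 : 1 ≤ k) (hkn : k ≤ n) (hn0 : 0 < n) (T : Finset (Fin n)) :
    ∑ F : TFace n k, chp T F.val =
      (if T = ∅ then (2:ℝ)^n else 0) - 1 -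
        (if T ∩ RS n k = ∅ then (-1:ℝ)^((T ∩ KS n k).card) * 2^(n-k) else 0) := by
  rw [sum_faces hk1 hn0 (chp T)]
  have h1 : ∑ F ∈ (univ : Finset (Fin n)).powerset, chp T F =
      if T = ∅ then (2:ℝ)^n else 0 := by
    rw [sum_chp (Finset.subset_univ T), Finset.card_univ, Fintype.card_fin]
  have h2 : chp T (∅ : Finset (Fin n)) = 1 := chp_empty' T
  have h3 : ∑ G ∈ (RS n k).powerset, chp T (KS n k ∪ G) =
      if T ∩ RS n k = ∅ then (-1:ℝ)^((T ∩ KS n k).card) * 2^(n-k) else 0 := by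
    have hstep : ∀ G ∈ (RS n k).powerset, chp T (KS n k ∪ G) = chp T (KS n k) * chp T G := by
      intro G hG
      exact chp_union T (KS_disjoint_RS.mono_right (Finset.mem_powerset.mp hG))
    rw [Finset.sum_congr rfl hstep, ← Finset.mul_sum]
    have hTK : chp T (KS n k) = (-1:ℝ)^((T ∩ KS n k).card) := chp_eq T (KS n k)
    have hcongr : ∀ G ∈ (RS n k).powerset, chp T G = chp (T ∩ RS n k) G := by
      intro G hG
      exact chp_congr_subset T (Finset.mem_powerset.mp hG)
    rw [Finset.sum_congr rfl hcongr, sum_chp Finset.inter_subset_right, card_RS hkn, hTK]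
    by_cases hTR : T ∩ RS n k = ∅ <;> simp [hTR]
  rw [h1, h2, h3]

lemma neg_one_pow_eq (m : ℕ) : ((-1:ℝ)^m) = if Odd m then -1 else 1 := by
  rcases Nat.even_or_odd m with h | h
  · rw [h.neg_one_pow, if_neg (by simpa [Nat.not_odd_iff_even] using h)]
  · rw [h.neg_one_pow, if_pos h]

lemma cvecT_eq (S : Finset (Fin n)) (F : TFace n k) :
    cvecT n k S F = (1 + chp F.val S) / 2 := by
  rw [cvecT, chp_comm, chp_eq, neg_one_pow_eq]
  by_cases h : Odd ((S ∩ F.val).card) <;> simp [h]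

lemma dvecT_eq (J : Finset (Fin n)) (F : TFace n k) :
    dvecT n k J F = (1 - chp F.val J) / 2 := by
  rw [dvecT, chp_eq, neg_one_pow_eq]
  by_cases h : Odd ((F.val ∩ J).card) <;> simp [h]

lemma pow_eq_chp (J : Finset (Fin n)) (F : TFace n k) :
    (-1:ℝ) ^ ((J ∩ F.val).card) = chp F.val J := by
  rw [chp_comm, chp_eq]

lemma chp_symmDiff_right (F J S : Finset (Fin n)) :
    chp F (J ∆ S) = chp F J * chp F S := by
  rw [chp_comm F (J ∆ S), ← chp_mul, chp_comm J F, chp_comm S F]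

/-- `Esum` with the arguments of `chp` flipped. -/
lemma Esum' (hk1 : 1 ≤ k) (hkn : k ≤ n) (hn0 : 0 < n) (T : Finset (Fin n)) :
    ∑ F : TFace n k, chp F.val T =
      (if T = ∅ then (2:ℝ)^n else 0) - 1 -
        (if T ∩ RS n k = ∅ then (-1:ℝ)^((T ∩ KS n k).card) * 2^(n-k) else 0) := by
  rw [← Esum hk1 hkn hn0 T]
  exact Finset.sum_congr rfl fun F _ => chp_comm F.val T


lemma card_symmDiff_parity (A B : Finset (Fin n)) :
    (A ∆ B).card + 2 * (A ∩ B).card = A.card + B.card := by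
  have hdef : A ∆ B = (A \ B) ∪ (B \ A) := symmDiff_def A B
  have hdisj : Disjoint (A \ B) (B \ A) :=
    disjoint_sdiff_sdiff
  have h1 := Finset.card_inter_add_card_sdiff A B
  have h2 := Finset.card_inter_add_card_sdiff B A
  have h3 : (A ∆ B).card = (A \ B).card + (B \ A).card := by
    rw [hdef, Finset.card_union_of_disjoint hdisj]
  rw [Finset.inter_comm B A] at h2
  omega

lemma inter_symmDiff_distrib (A B C : Finset (Fin n)) :
    (A ∆ B) ∩ C = (A ∩ C) ∆ (B ∩ C) := by
  ext i
  simp only [Finset.mem_inter, Finset.mem_symmDiff]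
  tauto

lemma union_inter_KR {A B : Finset (Fin n)} (hA : A ⊆ KS n k) (hB : B ⊆ RS n k) :
    (A ∪ B) ∩ KS n k = A ∧ (A ∪ B) ∩ RS n k = B := by
  have h1 : A ∩ RS n k = ∅ :=
    Finset.disjoint_iff_inter_eq_empty.mp (KS_disjoint_RS.mono_left hA)
  have h2 : B ∩ KS n k = ∅ :=
    Finset.disjoint_iff_inter_eq_empty.mp (KS_disjoint_RS.symm.mono_left hB)
  constructor
  · rw [Finset.union_inter_distrib_right, Finset.inter_eq_left.mpr hA, h2,
      Finset.union_empty]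
  · rw [Finset.union_inter_distrib_right, h1, Finset.inter_eq_left.mpr hB,
      Finset.empty_union]

section Main

variable (x : TFace n k → ℝ)

/-- The affine functional `a_W(x) = 1 + Σ_F χ_F(W)(1 - 2 x_F)`. -/
noncomputable def aF (x : TFace n k → ℝ) (W : Finset (Fin n)) : ℝ :=
  1 + ∑ F : TFace n k, chp F.val W * (1 - 2 * x F)

lemma sum_one_faces (hk1 : 1 ≤ k) (hkn : k ≤ n) (hn0 : 0 < n) :
    ∑ _F : TFace n k, (1:ℝ) = 2^n - 1 - 2^(n-k) := by
  have h := Esum' (n := n) (k := k) hk1 hkn hn0 ∅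
  simp only [Finset.empty_inter, Finset.card_empty, pow_zero, one_mul,
    eq_self_iff_true, if_true] at h
  rw [← h]
  exact Finset.sum_congr rfl fun F _ => (chp_empty' F.val).symm

lemma sum_chpS_faces (hk1 : 1 ≤ k) (hkn : k ≤ n) (hn0 : 0 < n)
    {S : Finset (Fin n)} (hSK : S ⊆ KS n k) (hSodd : Odd S.card) :
    ∑ F : TFace n k, chp F.val S = 2^(n-k) - 1 := by
  have h := Esum' (n := n) (k := k) hk1 hkn hn0 S
  have hSne : S ≠ ∅ := by
    intro hS
    rw [hS, Finset.card_empty] at hSodd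
    exact (Nat.not_odd_iff_even.mpr Even.zero) hSodd
  have hSR : S ∩ RS n k = ∅ :=
    Finset.disjoint_iff_inter_eq_empty.mp (KS_disjoint_RS.mono_left hSK).symm.symm
  have hSK' : S ∩ KS n k = S := Finset.inter_eq_left.mpr hSK
  rw [h, if_neg hSne, if_pos hSR, hSK', hSodd.neg_one_pow]
  ring

/-- The translation lemma: the stated inequality for `(S, J)` is equivalent to
`0 ≤ a_J + a_{J ∆ S}`. -/
lemma TL (hn : 2 ≤ n) (hk1 : 1 ≤ k) (hkn : k ≤ n)
    {S : Finset (Fin n)} (hSK : S ⊆ KS n k) (hSodd : Odd S.card)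
    (J : Finset (Fin n)) :
    (∑ F : TFace n k, (-1 : ℝ) ^ ((J ∩ F.val).card) * cvecT n k S F * x F ≤
        2 ^ (n - 2) - ∑ F : TFace n k, cvecT n k S F * dvecT n k J F) ↔
      0 ≤ aF x J + aF x (J ∆ S) := by
  have hn0 : 0 < n := lt_of_lt_of_le Nat.zero_lt_two hn
  have h4 : (4:ℝ) * 2^(n-2) = 2^n := by
    have hnn : n - 2 + 2 = n := by omega
    calc (4:ℝ) * 2^(n-2) = 2^(n-2+2) := by ring
      _ = 2^n := by rw [hnn]
  have hptw : ∑ F : TFace n k,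
      (chp F.val J * (1 - 2 * x F) + chp F.val (J ∆ S) * (1 - 2 * x F) +
        4 * (cvecT n k S F * dvecT n k J F) +
        4 * ((-1:ℝ) ^ ((J ∩ F.val).card) * cvecT n k S F * x F)) =
      ∑ F : TFace n k, ((1:ℝ) + chp F.val S) := by
    refine Finset.sum_congr rfl fun F _ => ?_
    rw [cvecT_eq, dvecT_eq, pow_eq_chp, chp_symmDiff_right]
    ring
  rw [Finset.sum_add_distrib, Finset.sum_add_distrib, Finset.sum_add_distrib,
    ← Finset.mul_sum, ← Finset.mul_sum, Finset.sum_add_distrib,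
    sum_one_faces hk1 hkn hn0, sum_chpS_faces hk1 hkn hn0 hSK hSodd] at hptw
  unfold aF
  constructor <;> intro h <;> nlinarith [hptw, h4]


lemma aF_vertex (hk1 : 1 ≤ k) (hkn : k ≤ n) (hn0 : 0 < n) (T W : Finset (Fin n)) :
    aF (dvecT n k T) W =
      (if W ∆ T = ∅ then (2:ℝ)^n else 0) -
        (if (W ∆ T) ∩ RS n k = ∅ then
          (-1:ℝ)^(((W ∆ T) ∩ KS n k).card) * 2^(n-k) else 0) := by
  unfold aF
  have hstep : ∀ F : TFace n k,
      chp F.val W * (1 - 2 * dvecT n k T F) = chp F.val (W ∆ T) := by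
    intro F
    rw [dvecT_eq, chp_symmDiff_right]
    ring
  rw [Finset.sum_congr rfl fun F _ => hstep F, Esum' hk1 hkn hn0]
  ring

lemma vertex_ok (hk1 : 1 ≤ k) (hkn : k ≤ n) (hn0 : 0 < n)
    (T : Finset (Fin n)) {S : Finset (Fin n)} (hSK : S ⊆ KS n k) (hSodd : Odd S.card)
    (J : Finset (Fin n)) :
    0 ≤ aF (dvecT n k T) J + aF (dvecT n k T) (J ∆ S) := by
  have hpow : (0:ℝ) ≤ 2^(n-k) := by positivity
  have hpown : (0:ℝ) ≤ 2^n := by positivity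
  set U₁ := J ∆ T with hU₁
  have hU₂ : (J ∆ S) ∆ T = U₁ ∆ S := by
    rw [hU₁, symmDiff_assoc, symmDiff_assoc, symmDiff_comm S T]
  rw [aF_vertex hk1 hkn hn0 T J, aF_vertex hk1 hkn hn0 T (J ∆ S), hU₂, ← hU₁]
  have hSR : S ∩ RS n k = ∅ :=
    Finset.disjoint_iff_inter_eq_empty.mp (KS_disjoint_RS.mono_left hSK)
  have hSKeq : S ∩ KS n k = S := Finset.inter_eq_left.mpr hSK
  have hdR : (U₁ ∆ S) ∩ RS n k = U₁ ∩ RS n k := by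
    rw [inter_symmDiff_distrib, hSR, ← Finset.bot_eq_empty, symmDiff_bot]
  have hdK : (U₁ ∆ S) ∩ KS n k = (U₁ ∩ KS n k) ∆ S := by
    rw [inter_symmDiff_distrib, hSKeq]
  by_cases hR : U₁ ∩ RS n k = ∅
  · rw [hdR, if_pos hR, if_pos hR, hdK]
    have hpar := card_symmDiff_parity (U₁ ∩ KS n k) S
    obtain ⟨m, hm⟩ := hSodd
    rcases Nat.even_or_odd ((U₁ ∩ KS n k)).card with hE | hO
    · have hO2 : Odd ((U₁ ∩ KS n k) ∆ S).card := by
        obtain ⟨m', hm'⟩ := hE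
        rw [Nat.odd_iff]; omega
      rw [hE.neg_one_pow, hO2.neg_one_pow]
      have : (0:ℝ) ≤ if U₁ ∆ S = ∅ then (2:ℝ)^n else 0 := by positivity
      have h2 : (0:ℝ) ≤ if U₁ = ∅ then (2:ℝ)^n else 0 := by positivity
      linarith
    · have hE2 : Even ((U₁ ∩ KS n k) ∆ S).card := by
        obtain ⟨m', hm'⟩ := hO
        rw [Nat.even_iff]; omega
      rw [hO.neg_one_pow, hE2.neg_one_pow]
      have : (0:ℝ) ≤ if U₁ ∆ S = ∅ then (2:ℝ)^n else 0 := by positivity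
      have h2 : (0:ℝ) ≤ if U₁ = ∅ then (2:ℝ)^n else 0 := by positivity
      linarith
  · rw [hdR, if_neg hR, if_neg hR]
    have hU₁ne : U₁ ≠ ∅ := by
      intro hc; rw [hc, Finset.empty_inter] at hR; exact hR rfl
    have hU₂ne : U₁ ∆ S ≠ ∅ := by
      intro hc
      rw [← hdR] at hR
      rw [hc, Finset.empty_inter] at hR
      exact hR rfl
    rw [if_neg hU₁ne, if_neg hU₂ne]
    norm_num

lemma aF_affine (z₁ z₂ : TFace n k → ℝ) {a b : ℝ} (hab : a + b = 1)
    (W : Finset (Fin n)) :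
    aF (a • z₁ + b • z₂) W = a * aF z₁ W + b * aF z₂ W := by
  unfold aF
  have hper : ∀ F : TFace n k,
      chp F.val W * (1 - 2 * (a • z₁ + b • z₂) F) =
        a * (chp F.val W * (1 - 2 * z₁ F)) + b * (chp F.val W * (1 - 2 * z₂ F)) := by
    intro F
    simp only [Pi.add_apply, Pi.smul_apply, smul_eq_mul]
    linear_combination (-1 : ℝ) * (chp F.val W) * hab
  rw [Finset.sum_congr rfl fun F _ => hper F, Finset.sum_add_distrib,
    ← Finset.mul_sum, ← Finset.mul_sum]
  linear_combination (-1 : ℝ) * hab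

lemma forward_ok (hk1 : 1 ≤ k) (hkn : k ≤ n) (hn0 : 0 < n)
    {x : TFace n k → ℝ} (hx : x ∈ convexHull ℝ (Set.range (dvecT n k)))
    {S : Finset (Fin n)} (hSK : S ⊆ KS n k) (hSodd : Odd S.card)
    (J : Finset (Fin n)) :
    0 ≤ aF x J + aF x (J ∆ S) := by
  have hsub : convexHull ℝ (Set.range (dvecT n k)) ⊆
      {z : TFace n k → ℝ | 0 ≤ aF z J + aF z (J ∆ S)} := by
    apply convexHull_min
    · rintro _ ⟨T, rfl⟩
      exact vertex_ok hk1 hkn hn0 T hSK hSodd J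
    · intro z₁ hz₁ z₂ hz₂ a b ha hb hab
      simp only [Set.mem_setOf_eq] at hz₁ hz₂ ⊢
      rw [aF_affine z₁ z₂ hab J, aF_affine z₁ z₂ hab (J ∆ S)]
      nlinarith
  exact hsub hx

lemma hPair_lemma (hn : 2 ≤ n) (hk1 : 1 ≤ k) (hkn : k ≤ n) (x : TFace n k → ℝ)
    (h : ∀ S : Finset (Fin n), (∀ i ∈ S, i.val < k) → Odd S.card →
      ∀ J : Finset (Fin n), Even J.card →
        ∑ F : TFace n k, (-1 : ℝ) ^ ((J ∩ F.val).card) * cvecT n k S F * x F ≤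
          2 ^ (n - 2) - ∑ F : TFace n k, cvecT n k S F * dvecT n k J F)
    (A B C : Finset (Fin n)) (hA : A ⊆ KS n k) (hB : B ⊆ KS n k) (hC : C ⊆ RS n k)
    (hOdd : Odd (A.card + B.card)) :
    0 ≤ aF x (A ∪ C) + aF x (B ∪ C) := by
  have hSsub : A ∆ B ⊆ KS n k := by
    intro i hi
    rcases Finset.mem_symmDiff.mp hi with ⟨h1, _⟩ | ⟨h1, _⟩
    · exact hA h1
    · exact hB h1
  have hScard : Odd (A ∆ B).card := by
    have hpar := card_symmDiff_parity A B
    rw [Nat.odd_iff] at hOdd ⊢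
    omega
  have hCA : ∀ i : Fin n, i ∈ C → i ∉ A := fun i hi hia =>
    Finset.disjoint_left.mp (KS_disjoint_RS.mono_left hA) hia (hC hi)
  have hCB : ∀ i : Fin n, i ∈ C → i ∉ B := fun i hi hib =>
    Finset.disjoint_left.mp (KS_disjoint_RS.mono_left hB) hib (hC hi)
  have hU1 : (A ∪ C) ∆ (A ∆ B) = B ∪ C := by
    ext i
    have h1 := hCA i
    have h2 := hCB i
    simp only [Finset.mem_symmDiff, Finset.mem_union]
    by_cases hic : i ∈ C <;> [skip; skip] <;> tauto
  have hU2 : (B ∪ C) ∆ (A ∆ B) = A ∪ C := by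
    ext i
    have h1 := hCA i
    have h2 := hCB i
    simp only [Finset.mem_symmDiff, Finset.mem_union]
    by_cases hic : i ∈ C <;> [skip; skip] <;> tauto
  have hcardAC : (A ∪ C).card = A.card + C.card :=
    Finset.card_union_of_disjoint (KS_disjoint_RS.mono (le_refl _) hC |>.mono_left hA)
  have hcardBC : (B ∪ C).card = B.card + C.card :=
    Finset.card_union_of_disjoint (KS_disjoint_RS.mono (le_refl _) hC |>.mono_left hB)
  have hSmem : ∀ i ∈ A ∆ B, i.val < k := fun i hi => mem_KS.mp (hSsub hi)
  rcases Nat.even_or_odd (A ∪ C).card with hE | hO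
  · have := (TL x hn hk1 hkn hSsub hScard (A ∪ C)).mp
      (h (A ∆ B) hSmem hScard (A ∪ C) hE)
    rw [hU1] at this
    exact this
  · have hE2 : Even (B ∪ C).card := by
      rw [Nat.odd_iff] at hO hScard
      have hpar := card_symmDiff_parity A B
      rw [Nat.even_iff]
      omega
    have := (TL x hn hk1 hkn hSsub hScard (B ∪ C)).mp
      (h (A ∆ B) hSmem hScard (B ∪ C) hE2)
    rw [hU2] at this
    linarith

lemma backward_ok (hn : 2 ≤ n) (hk1 : 1 ≤ k) (hkn : k ≤ n) (x : TFace n k → ℝ)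
    (h : ∀ S : Finset (Fin n), (∀ i ∈ S, i.val < k) → Odd S.card →
      ∀ J : Finset (Fin n), Even J.card →
        ∑ F : TFace n k, (-1 : ℝ) ^ ((J ∩ F.val).card) * cvecT n k S F * x F ≤
          2 ^ (n - 2) - ∑ F : TFace n k, cvecT n k S F * dvecT n k J F) :
    x ∈ convexHull ℝ (Set.range (dvecT n k)) := by
  have hn0 : 0 < n := by omega
  have hUU : (univ : Finset (Fin n)) = KS n k ∪ RS n k := KS_union_RS.symm
  set OddK : Finset (Finset (Fin n)) :=
    (KS n k).powerset.filter (fun A => Odd A.card) with hOddKdef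
  have hOKne : OddK.Nonempty := by
    refine ⟨{⟨0, hn0⟩}, ?_⟩
    rw [hOddKdef, Finset.mem_filter, Finset.mem_powerset]
    constructor
    · rw [Finset.singleton_subset_iff, mem_KS]
      exact hk1
    · simp
  set u : Finset (Fin n) → ℝ :=
    fun C => OddK.inf' hOKne (fun A => aF x (A ∪ C)) with hudef
  set p : Finset (Fin n) → ℝ :=
    fun W => (aF x W + (-1:ℝ)^((W ∩ KS n k).card) * u (W ∩ RS n k)) / 2^n with hpdef
  have hdecomp : ∀ W : Finset (Fin n), (W ∩ KS n k) ∪ (W ∩ RS n k) = W := by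
    intro W
    ext i
    simp only [Finset.mem_union, Finset.mem_inter, mem_KS, mem_RS]
    by_cases hik : i.val < k <;> tauto
  -- nonnegativity
  have hp0 : ∀ W : Finset (Fin n), 0 ≤ p W := by
    intro W
    have hpow : (0:ℝ) < 2^n := by positivity
    rw [hpdef]
    apply div_nonneg _ (le_of_lt hpow)
    rcases Nat.even_or_odd ((W ∩ KS n k)).card with hE | hO
    · rw [hE.neg_one_pow, one_mul]
      obtain ⟨A₀, hA₀mem, hA₀eq⟩ := Finset.exists_mem_eq_inf' hOKne
        (fun A => aF x (A ∪ (W ∩ RS n k)))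
      rw [hudef]
      simp only []
      rw [hA₀eq]
      rw [hOddKdef, Finset.mem_filter, Finset.mem_powerset] at hA₀mem
      have := hPair_lemma hn hk1 hkn x h (W ∩ KS n k) A₀ (W ∩ RS n k)
        Finset.inter_subset_right hA₀mem.1 Finset.inter_subset_right
        (by
          obtain ⟨m, hm⟩ := hA₀mem.2
          obtain ⟨m', hm'⟩ := hE
          rw [Nat.odd_iff]; omega)
      rw [hdecomp W] at this
      linarith
    · rw [hO.neg_one_pow]
      have hmem : (W ∩ KS n k) ∈ OddK := by
        rw [hOddKdef, Finset.mem_filter, Finset.mem_powerset]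
        exact ⟨Finset.inter_subset_right, hO⟩
      have hle : u (W ∩ RS n k) ≤ aF x W := by
        rw [hudef]
        have := Finset.inf'_le (fun A => aF x (A ∪ (W ∩ RS n k))) hmem
        rw [hdecomp W] at this
        exact this
      linarith
  -- total mass
  have hsgn : ∑ A ∈ (KS n k).powerset, (-1:ℝ)^A.card = 0 := by
    have hchpK : ∀ A ∈ (KS n k).powerset, (-1:ℝ)^A.card = chp (KS n k) A := by
      intro A hA
      rw [chp_eq, Finset.inter_eq_right.mpr (Finset.mem_powerset.mp hA)]
    rw [Finset.sum_congr rfl hchpK, sum_chp (le_refl _),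
      if_neg (Finset.nonempty_iff_ne_empty.mp (KS_nonempty hk1 hn0))]
  have hmass : ∑ W ∈ (univ : Finset (Fin n)).powerset, p W = 1 := by
    have hzero : ∀ F : TFace n k,
        ∑ W ∈ (univ : Finset (Fin n)).powerset, chp F.val W * (1 - 2 * x F) = 0 := by
      intro F
      rw [← Finset.sum_mul, sum_chp (Finset.subset_univ _),
        if_neg (Finset.nonempty_iff_ne_empty.mp F.prop.1), zero_mul]
    have hA : ∑ W ∈ (univ : Finset (Fin n)).powerset, aF x W = 2^n := by
      unfold aF
      rw [Finset.sum_add_distrib, Finset.sum_const, Finset.card_powerset,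
        Finset.card_univ, Fintype.card_fin, Finset.sum_comm]
      rw [Finset.sum_congr rfl fun F _ => hzero F, Finset.sum_const_zero]
      simp
    have hB : ∑ W ∈ (univ : Finset (Fin n)).powerset,
        (-1:ℝ)^((W ∩ KS n k).card) * u (W ∩ RS n k) = 0 := by
      rw [hUU, sum_pow_union KS_disjoint_RS]
      have hinner : ∀ A ∈ (KS n k).powerset, ∀ B ∈ (RS n k).powerset,
          (-1:ℝ)^(((A ∪ B) ∩ KS n k).card) * u ((A ∪ B) ∩ RS n k) =
            (-1:ℝ)^(A.card) * u B := by
        intro A hA B hB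
        obtain ⟨e1, e2⟩ := union_inter_KR (Finset.mem_powerset.mp hA)
          (Finset.mem_powerset.mp hB)
        rw [e1, e2]
      rw [Finset.sum_congr rfl fun A hA =>
        Finset.sum_congr rfl fun B hB => hinner A hA B hB]
      have : ∀ A ∈ (KS n k).powerset,
          ∑ B ∈ (RS n k).powerset, (-1:ℝ)^(A.card) * u B =
            (-1:ℝ)^(A.card) * ∑ B ∈ (RS n k).powerset, u B := by
        intro A _
        rw [Finset.mul_sum]
      rw [Finset.sum_congr rfl this, ← Finset.sum_mul, hsgn, zero_mul]
    have hsplit : ∑ W ∈ (univ : Finset (Fin n)).powerset, p W =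
        ((∑ W ∈ (univ : Finset (Fin n)).powerset, aF x W) +
          ∑ W ∈ (univ : Finset (Fin n)).powerset,
            (-1:ℝ)^((W ∩ KS n k).card) * u (W ∩ RS n k)) / 2^n := by
      rw [hpdef, ← Finset.sum_add_distrib, Finset.sum_div]
    rw [hsplit, hA, hB, add_zero, div_self (by positivity)]
  -- Fourier coefficients at the faces
  have hchpKA : ∀ A ∈ (KS n k).powerset, (-1:ℝ)^A.card = chp (KS n k) A := by
    intro A hA
    rw [chp_eq, Finset.inter_eq_right.mpr (Finset.mem_powerset.mp hA)]
  have hchpF : ∀ F₀ : TFace n k,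
      ∑ W ∈ (univ : Finset (Fin n)).powerset, p W * chp F₀.val W = 1 - 2 * x F₀ := by
    intro F₀
    have hne0 : F₀.val ≠ ∅ := Finset.nonempty_iff_ne_empty.mp F₀.prop.1
    have hA : ∑ W ∈ (univ : Finset (Fin n)).powerset, aF x W * chp F₀.val W
        = 2^n * (1 - 2 * x F₀) := by
      unfold aF
      have hexp : ∀ W ∈ (univ : Finset (Fin n)).powerset,
          (1 + ∑ F : TFace n k, chp F.val W * (1 - 2 * x F)) * chp F₀.val W =
            chp F₀.val W + ∑ F : TFace n k, (1 - 2 * x F) * chp (F.val ∆ F₀.val) W := by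
        intro W _
        have hper : ∀ F : TFace n k, chp F.val W * (1 - 2 * x F) * chp F₀.val W
            = (1 - 2 * x F) * chp (F.val ∆ F₀.val) W := by
          intro F
          rw [← chp_mul]
          ring
        rw [add_mul, one_mul, Finset.sum_mul, Finset.sum_congr rfl fun F _ => hper F]
      rw [Finset.sum_congr rfl hexp, Finset.sum_add_distrib,
        sum_chp (Finset.subset_univ _), if_neg hne0, Finset.sum_comm]
      have hinner : ∀ F : TFace n k,
          ∑ W ∈ (univ : Finset (Fin n)).powerset, (1 - 2 * x F) * chp (F.val ∆ F₀.val) W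
            = if F = F₀ then (1 - 2 * x F) * ((2:ℝ)^n) else 0 := by
        intro F
        rw [← Finset.mul_sum, sum_chp (Finset.subset_univ _), Finset.card_univ,
          Fintype.card_fin]
        by_cases hFF : F = F₀
        · rw [if_pos (by rw [hFF, ← Finset.bot_eq_empty, symmDiff_eq_bot]), if_pos hFF]
        · rw [if_neg (fun hc => hFF (Subtype.ext (by
              rw [← Finset.bot_eq_empty] at hc
              exact symmDiff_eq_bot.mp hc))), if_neg hFF, mul_zero]
      rw [Finset.sum_congr rfl fun F _ => hinner F, Finset.sum_ite_eq' univ F₀]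
      simp only [Finset.mem_univ, if_true]
      ring
    have hB : ∑ W ∈ (univ : Finset (Fin n)).powerset,
        ((-1:ℝ)^((W ∩ KS n k).card) * u (W ∩ RS n k)) * chp F₀.val W = 0 := by
      rw [hUU, sum_pow_union KS_disjoint_RS]
      have hfac : ∀ A ∈ (KS n k).powerset, ∀ B ∈ (RS n k).powerset,
          ((-1:ℝ)^(((A ∪ B) ∩ KS n k).card) * u ((A ∪ B) ∩ RS n k)) * chp F₀.val (A ∪ B)
            = chp (KS n k ∆ F₀.val) A * (u B * chp F₀.val B) := by
        intro A hA B hB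
        obtain ⟨e1, e2⟩ := union_inter_KR (Finset.mem_powerset.mp hA)
          (Finset.mem_powerset.mp hB)
        have hABdisj : Disjoint A B :=
          (KS_disjoint_RS.mono (Finset.mem_powerset.mp hA) (Finset.mem_powerset.mp hB))
        have h1 : (-1:ℝ)^A.card = chp (KS n k) A := hchpKA A hA
        have h2 : chp (KS n k) A * chp F₀.val A = chp (KS n k ∆ F₀.val) A :=
          chp_mul _ _ _
        rw [e1, e2, chp_union F₀.val hABdisj, h1, ← h2]
        ring
      rw [Finset.sum_congr rfl fun A hA =>
        Finset.sum_congr rfl fun B hB => hfac A hA B hB]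
      have hfact : ∀ A ∈ (KS n k).powerset,
          ∑ B ∈ (RS n k).powerset, chp (KS n k ∆ F₀.val) A * (u B * chp F₀.val B) =
            chp (KS n k ∆ F₀.val) A * ∑ B ∈ (RS n k).powerset, u B * chp F₀.val B := by
        intro A _
        rw [Finset.mul_sum]
      rw [Finset.sum_congr rfl hfact, ← Finset.sum_mul]
      have hzeroA : ∑ A ∈ (KS n k).powerset, chp (KS n k ∆ F₀.val) A = 0 := by
        have hc : ∀ A ∈ (KS n k).powerset,
            chp (KS n k ∆ F₀.val) A = chp ((KS n k ∆ F₀.val) ∩ KS n k) A :=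
          fun A hA => chp_congr_subset _ (Finset.mem_powerset.mp hA)
        have hne : (KS n k ∆ F₀.val) ∩ KS n k ≠ ∅ := by
          obtain ⟨i, hik, hiF⟩ := F₀.prop.2
          intro hc2
          have hi : i ∈ (KS n k ∆ F₀.val) ∩ KS n k := by
            rw [Finset.mem_inter, Finset.mem_symmDiff]
            exact ⟨Or.inl ⟨mem_KS.mpr hik, hiF⟩, mem_KS.mpr hik⟩
          rw [hc2] at hi
          simp at hi
        rw [Finset.sum_congr rfl hc, sum_chp Finset.inter_subset_right, if_neg hne]
      rw [hzeroA, zero_mul]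
    have hsplit : ∑ W ∈ (univ : Finset (Fin n)).powerset, p W * chp F₀.val W =
        ((∑ W ∈ (univ : Finset (Fin n)).powerset, aF x W * chp F₀.val W) +
          ∑ W ∈ (univ : Finset (Fin n)).powerset,
            ((-1:ℝ)^((W ∩ KS n k).card) * u (W ∩ RS n k)) * chp F₀.val W) / 2^n := by
      rw [← Finset.sum_add_distrib, Finset.sum_div]
      refine Finset.sum_congr rfl fun W _ => ?_
      rw [hpdef]
      ring
    rw [hsplit, hA, hB, add_zero, mul_comm, mul_div_assoc,
      div_self (by positivity : ((2:ℝ)^n) ≠ 0), mul_one]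
  -- conclusion
  have hxeq : x = ∑ W ∈ (univ : Finset (Fin n)).powerset, p W • dvecT n k W := by
    funext F₀
    rw [Finset.sum_apply]
    have hev : ∀ W ∈ (univ : Finset (Fin n)).powerset,
        (p W • dvecT n k W) F₀ = (p W - p W * chp F₀.val W) / 2 := by
      intro W _
      rw [Pi.smul_apply, smul_eq_mul, dvecT_eq]
      ring
    rw [Finset.sum_congr rfl hev, ← Finset.sum_div, Finset.sum_sub_distrib, hmass,
      hchpF F₀]
    ring
  rw [hxeq, ← Finset.centerMass_eq_of_sum_1 _ (dvecT n k) hmass]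
  exact Finset.centerMass_mem_convexHull _ (fun W _ => hp0 W)
    (by rw [hmass]; norm_num) (fun W _ => Set.mem_range_self W)

end Main

end Stmt11

/-- complete H-representation of `GCut(𝕋_n^k)`: `x ∈ GCut(𝕋_n^k)` iff
for every `S ⊆ [k]` with `#S` odd and every `J ⊆ [n]` with `#J` even,
`Σ_F (−1)^(#(J ∩ F)) c^S_F x_F ≤ 2^(n−2) − Σ_F c^S_F d^J_F`. -/
theorem stmt_11 (n k : ℕ) (hn : 2 ≤ n) (hk1 : 1 ≤ k) (hkn : k ≤ n)
    (x : TFace n k → ℝ) :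
    x ∈ convexHull ℝ (Set.range (dvecT n k)) ↔
      ∀ S : Finset (Fin n), (∀ i ∈ S, i.val < k) → Odd S.card →
        ∀ J : Finset (Fin n), Even J.card →
          ∑ F : TFace n k, (-1 : ℝ) ^ ((J ∩ F.val).card) * cvecT n k S F * x F ≤
            2 ^ (n - 2) - ∑ F : TFace n k, cvecT n k S F * dvecT n k J F := by
  constructor
  · intro hx S hSk hSodd J _hJ
    have hSK : S ⊆ Stmt11.KS n k := fun i hi => Stmt11.mem_KS.mpr (hSk i hi)
    rw [Stmt11.TL x hn hk1 hkn hSK hSodd J]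
    exact Stmt11.forward_ok hk1 hkn (by omega) hx hSK hSodd J
  · intro h
    exact Stmt11.backward_ok hn hk1 hkn x h
end

section
/- Let Δ be a finite simplicial complex on [n] with at least one nonempty face. For T a nonempty face of Δ, let f(T) ≥ 1 be the number of facets (inclusion-maximal faces) of Δ containing T. Then for every nonempty face T ∈ Δ̄ and every S ⊆ [n], Σ_{(H,F) ∈ E(Δ) with T ⊆ H} (1/f(T)) · u^S_{(H,F)} = 1 if T ⊆ S and = 0 otherwise. (That is, the linear map Ω_Δ with entries (Ω_Δ)^{(H,F)}_T = 1/f(T) when T ⊆ H and 0 otherwise sends each vertex u^S of the binary marginal polytope Marg(Δ) to the vertex v^S of the correlation polytope Corr(Δ).) -/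
open Finset

/-- `F` is a facet (inclusion-maximal face) of `Δ`. -/
def IsFacet {n : ℕ} (Δ : Finset (Finset (Fin n))) (F : Finset (Fin n)) : Prop :=
  F ∈ Δ ∧ ∀ G ∈ Δ, F ⊆ G → F = G

instance {n : ℕ} (Δ : Finset (Finset (Fin n))) : DecidablePred (IsFacet Δ) := fun F => by
  unfold IsFacet; infer_instance

/-- The index set `E(Δ) = {(H, F) : H ⊆ F ∈ facets(Δ)}`. -/
abbrev EIdx {n : ℕ} (Δ : Finset (Finset (Fin n))) : Type :=
  {p : Finset (Fin n) × Finset (Fin n) // p.1 ⊆ p.2 ∧ IsFacet Δ p.2}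

/-- The vertex `u^S` of the binary marginal polytope:
`u^S_{(H,F)} = 1` if `S ∩ F = H`, `0` otherwise. -/
noncomputable def uvec {n : ℕ} (Δ : Finset (Finset (Fin n))) (S : Finset (Fin n)) :
    EIdx Δ → ℝ :=
  fun p => if S ∩ p.val.2 = p.val.1 then 1 else 0

/-- `f(T)`: the number of facets of `Δ` containing `T`. -/
def numFacets {n : ℕ} (Δ : Finset (Finset (Fin n))) (T : Finset (Fin n)) : ℕ :=
  (Δ.filter (fun F => IsFacet Δ F ∧ T ⊆ F)).card

/-! For each facet `F`, the block of `u^S` indexed by the pairs `(H, F)` has exactly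
one nonzero entry, at `H = S ∩ F`, and `T ⊆ S ∩ F` iff `T ⊆ S` and `T ⊆ F`. So the sum
counts the facets containing `T`, each with weight `1 / f(T)`, when `T ⊆ S`, and nothing
otherwise. -/

section

variable {n : ℕ} {Δ : Finset (Finset (Fin n))}

theorem isFacet_iff_maximal {F : Finset (Fin n)} : IsFacet Δ F ↔ Maximal (· ∈ Δ) F :=
  ⟨fun h => ⟨h.1, fun G hG hFG => (h.2 G hG hFG).ge⟩,
    fun h => ⟨h.1, fun _ hG hFG => le_antisymm hFG (h.2 hG hFG)⟩⟩

theorem exists_isFacet_superset {T : Finset (Fin n)} (hT : T ∈ Δ) :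
    ∃ F, IsFacet Δ F ∧ T ⊆ F := by
  obtain ⟨F, hTF, hF⟩ := Δ.exists_le_maximal hT
  exact ⟨F, isFacet_iff_maximal.2 hF, hTF⟩

theorem one_le_numFacets {T : Finset (Fin n)} (hT : T ∈ Δ) : 1 ≤ numFacets Δ T := by
  obtain ⟨F, hF, hTF⟩ := exists_isFacet_superset hT
  exact card_pos.mpr ⟨F, mem_filter.mpr ⟨hF.1, hF, hTF⟩⟩

theorem card_filter_uvec_eq_one (T S : Finset (Fin n)) :
    #{p : EIdx Δ | S ∩ p.val.2 = p.val.1 ∧ T ⊆ p.val.1} =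
      #{F ∈ Δ | IsFacet Δ F ∧ T ⊆ S ∩ F} := by
  refine card_bij' (fun p _ => p.val.2)
    (fun F hF => ⟨(S ∩ F, F), inter_subset_right, (mem_filter.mp hF).2.1⟩) ?_ ?_ ?_ ?_
  · intro p hp
    obtain ⟨hSH, hTH⟩ := (mem_filter.mp hp).2
    exact mem_filter.mpr ⟨p.prop.2.1, p.prop.2, hSH ▸ hTH⟩
  · intro F hF
    exact mem_filter.mpr ⟨mem_univ _, rfl, (mem_filter.mp hF).2.2⟩
  · intro p hp
    exact Subtype.ext (Prod.ext (mem_filter.mp hp).2.1 rfl)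
  · intro F _
    rfl

theorem card_filter_isFacet_subset_inter (T S : Finset (Fin n)) :
    #{F ∈ Δ | IsFacet Δ F ∧ T ⊆ S ∩ F} = if T ⊆ S then numFacets Δ T else 0 := by
  split_ifs with hTS
  · simp only [subset_inter_iff, hTS, true_and]
    rfl
  · simp only [subset_inter_iff, hTS, false_and, and_false, filter_false, card_empty]

end

theorem stmt_19_general {n : ℕ} (Δ : Finset (Finset (Fin n)))
    (T : Finset (Fin n)) (hT : T ∈ Δ) (S : Finset (Fin n)) :
    1 ≤ numFacets Δ T ∧
    ∑ p : EIdx Δ,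
        (if T ⊆ p.val.1 then (1 : ℝ) / (numFacets Δ T) else 0) * uvec Δ S p =
      if T ⊆ S then 1 else 0 := by
  refine ⟨one_le_numFacets hT, ?_⟩
  have hf : (numFacets Δ T : ℝ) ≠ 0 :=
    Nat.cast_ne_zero.2 (Nat.one_le_iff_ne_zero.1 (one_le_numFacets hT))
  simp only [uvec, mul_ite, mul_one, mul_zero, ← ite_and]
  rw [← sum_filter, sum_const, nsmul_eq_mul, card_filter_uvec_eq_one,
    card_filter_isFacet_subset_inter]
  split_ifs
  · exact mul_one_div_cancel hf
  · simp

/-- for every nonempty face `T ∈ Δ̄` one has `f(T) ≥ 1`, and for every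
`S ⊆ [n]`, `Σ_{(H,F) ∈ E(Δ), T ⊆ H} (1/f(T)) · u^S_{(H,F)} = 1` if `T ⊆ S` and `0`
otherwise; i.e. the map `Ω_Δ` sends each vertex `u^S` of `Marg(Δ)` to the vertex `v^S`
of `Corr(Δ)`. -/
theorem stmt_19 {n : ℕ} (Δ : Finset (Finset (Fin n)))
    (hΔ : ∀ F ∈ Δ, ∀ G, G ⊆ F → G ∈ Δ)
    (T : Finset (Fin n)) (hT : T ∈ Δ) (hTne : T.Nonempty) (S : Finset (Fin n)) :
    1 ≤ numFacets Δ T ∧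
    ∑ p : EIdx Δ,
        (if T ⊆ p.val.1 then (1 : ℝ) / (numFacets Δ T) else 0) * uvec Δ S p =
      if T ⊆ S then 1 else 0 :=
  stmt_19_general Δ T hT S
end
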